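/- arXiv:2312.10736 — 3 statements merged into one kernel-verified Lean document; each statement's English description precedes it below -/
import Mathlib

section
/- Let $\kappa < \lambda$ be infinite cardinals with $\kappa$ regular and $\lambda$ inaccessible. Then the Lévy collapse $Coll(\kappa, <\lambda)$ has the $\lambda$-chain condition, i.e., every antichain in $Coll(\kappa, <\lambda)$ has cardinality less than $\lambda$. -/
/-!
STATEMENT 10: for `κ < λ` with `κ` infinite regular and `λ` inaccessible, the Lévy
collapse `Coll(κ, <λ)` has the `λ`-chain condition.  Conditions are coded as sets of
triples `(γ, δ, v)` (meaning `p(γ, δ) = v`) of ordinals.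
-/

universe u

/-- `p` is a condition of `Coll(κ, <λ)`: a partial function from `κ × λ` to the
ordinals, of size `< κ`, with `p(γ, δ) ∈ δ`. -/
def IsCollCond (κ lam : Cardinal.{u})
    (p : Set (Ordinal.{u} × Ordinal.{u} × Ordinal.{u})) : Prop :=
  Cardinal.mk ↥p < Cardinal.lift.{u + 1} κ ∧
  (∀ t ∈ p, t.1 < κ.ord ∧ t.2.1 < lam.ord ∧ t.2.2 < t.2.1) ∧
  (∀ t ∈ p, ∀ t' ∈ p, t.1 = t'.1 → t.2.1 = t'.2.1 → t.2.2 = t'.2.2)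

/-- Compatibility in `Coll(κ, <λ)` (ordered by reverse inclusion): a common
extension exists. -/
def CollCompat (κ lam : Cardinal.{u})
    (p q : Set (Ordinal.{u} × Ordinal.{u} × Ordinal.{u})) : Prop :=
  ∃ r, IsCollCond κ lam r ∧ p ⊆ r ∧ q ⊆ r

open Cardinal Set

/-- A set of ordinals below `lam.ord` of cardinality `< lam` is bounded below
`lam.ord`, for `lam` regular. -/
lemma aux_bdd {lam : Cardinal.{u}} (hreg : lam.IsRegular)
    (S : Set Ordinal.{u}) (hS : Cardinal.mk ↥S < Cardinal.lift.{u + 1} lam)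
    (hb : ∀ o ∈ S, o < lam.ord) : ∃ B < lam.ord, ∀ o ∈ S, o ≤ B := by
  obtain ⟨c, hclt, hceq⟩ := Cardinal.lt_lift_iff.1 hS
  have hne : Nonempty (c.out ≃ ↥S) := by
    rw [← Cardinal.lift_mk_eq'.{u, u + 1}]
    rw [Cardinal.mk_out, Cardinal.lift_id'.{u, u + 1}]
    exact hceq
  obtain ⟨e⟩ := hne
  set f : c.out → Ordinal.{u} := fun i => ((e i : ↥S) : Ordinal.{u}) with hf
  have hflt : ∀ i, f i < lam.ord := fun i => hb _ (e i).2
  have hsup : iSup f < lam.ord := by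
    refine Cardinal.iSup_lt_ord_of_isRegular hreg ?_ hflt
    rwa [Cardinal.mk_out]
  refine ⟨iSup f, hsup, fun o ho => ?_⟩
  have h := Ordinal.le_iSup f (e.symm ⟨o, ho⟩)
  simpa [hf] using h

/-- Pigeonhole: if an unbounded (in `lam.ord`) set of indices is mapped into fewer
than `lam` values, some fiber is unbounded. -/
lemma aux_pigeon {lam : Cardinal.{u}} (hreg : lam.IsRegular)
    {C : Type (u + 1)} (V : Set C) (hV : Cardinal.mk ↥V < Cardinal.lift.{u + 1} lam)
    (J : Set Ordinal.{u}) (g : Ordinal.{u} → C)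
    (hg : ∀ α ∈ J, g α ∈ V)
    (hJ : ∀ b < lam.ord, ∃ α ∈ J, b < α) :
    ∃ c, ∀ b < lam.ord, ∃ α ∈ J, g α = c ∧ b < α := by
  by_contra hcon
  push_neg at hcon
  choose bfun hb1 hb2 using hcon
  obtain ⟨B, hB, hBle⟩ := aux_bdd hreg (bfun '' V) (lt_of_le_of_lt Cardinal.mk_image_le hV)
    (by rintro o ⟨c, _, rfl⟩; exact hb1 c)
  obtain ⟨α, hαJ, hα⟩ := hJ B hB
  have h1 : α ≤ bfun (g α) := hb2 (g α) α hαJ rfl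
  have h2 : bfun (g α) ≤ B := hBle _ ⟨g α, hg α hαJ, rfl⟩
  exact absurd hα (not_lt.mpr (h1.trans h2))

/-- Counting: there are fewer than `lam` sets of triples with coordinates bounded by
`κ.ord`, `μ`, `μ` respectively, for `μ < lam.ord` and `lam` inaccessible. -/
lemma aux_count (κ lam : Cardinal.{u}) (hlt : κ < lam)
    (hinacc : lam.IsInaccessible) {μ : Ordinal.{u}} (hμ : μ < lam.ord) :
    Cardinal.mk ↥{s : Set (Ordinal.{u} × Ordinal.{u} × Ordinal.{u}) |
        ∀ t ∈ s, t.1 < κ.ord ∧ t.2.1 < μ ∧ t.2.2 < μ} < Cardinal.lift.{u + 1} lam := by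
  set Sμ : Set (Ordinal.{u} × Ordinal.{u} × Ordinal.{u}) :=
    {t | t.1 < κ.ord ∧ t.2.1 < μ ∧ t.2.2 < μ} with hSμ
  -- inject the family into the powerset of `Sμ`
  have h1 : Cardinal.mk ↥{s : Set (Ordinal.{u} × Ordinal.{u} × Ordinal.{u}) |
      ∀ t ∈ s, t.1 < κ.ord ∧ t.2.1 < μ ∧ t.2.2 < μ} ≤ Cardinal.mk (Set ↥Sμ) := by
    refine ⟨⟨fun s => {x : ↥Sμ | x.1 ∈ s.1}, ?_⟩⟩
    rintro ⟨s₁, hs₁⟩ ⟨s₂, hs₂⟩ h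
    have h'' : {x : ↥Sμ | x.1 ∈ s₁} = {x : ↥Sμ | x.1 ∈ s₂} := h
    have h' : ∀ x : ↥Sμ, x.1 ∈ s₁ ↔ x.1 ∈ s₂ := fun x => Set.ext_iff.1 h'' x
    simp only [Subtype.mk.injEq]
    ext t
    constructor
    · intro ht
      exact (h' ⟨t, hs₁ t ht⟩).1 ht
    · intro ht
      exact (h' ⟨t, hs₂ t ht⟩).2 ht
  -- bound the size of `Sμ`
  have h2 : Cardinal.mk ↥Sμ ≤ Cardinal.lift.{u + 1} (κ * (μ.card * μ.card)) := by
    have hemb : Cardinal.mk ↥Sμ ≤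
        Cardinal.mk (↥(Iio κ.ord) × ↥(Iio μ) × ↥(Iio μ)) := by
      refine ⟨⟨fun x => ⟨⟨x.1.1, x.2.1⟩, ⟨x.1.2.1, x.2.2.1⟩, ⟨x.1.2.2, x.2.2.2⟩⟩, ?_⟩⟩
      rintro ⟨⟨a, b, c⟩, h⟩ ⟨⟨a', b', c'⟩, h'⟩ he
      simp only [Prod.mk.injEq, Subtype.mk.injEq] at he ⊢
      exact ⟨congrArg Subtype.val he.1, congrArg Subtype.val he.2.1, congrArg Subtype.val he.2.2⟩
    refine hemb.trans ?_
    rw [Cardinal.mk_prod, Cardinal.mk_prod]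
    simp only [Cardinal.lift_id]
    rw [Ordinal.mk_Iio_ordinal, Ordinal.mk_Iio_ordinal, Cardinal.card_ord,
      ← Cardinal.lift_mul, ← Cardinal.lift_mul]
  have hμc : μ.card < lam := Cardinal.lt_ord.1 hμ
  have hν : κ * (μ.card * μ.card) < lam :=
    Cardinal.mul_lt_of_lt hinacc.1.le hlt
      (Cardinal.mul_lt_of_lt hinacc.1.le hμc hμc)
  have h3 : (2 : Cardinal.{u + 1}) ^ Cardinal.mk ↥Sμ < Cardinal.lift.{u + 1} lam := by
    calc (2 : Cardinal.{u + 1}) ^ Cardinal.mk ↥Sμ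
        ≤ (2 : Cardinal.{u + 1}) ^ Cardinal.lift.{u + 1} (κ * (μ.card * μ.card)) :=
          Cardinal.power_le_power_left two_ne_zero h2
      _ = Cardinal.lift.{u + 1} (2 ^ (κ * (μ.card * μ.card))) := by
          rw [Cardinal.lift_two_power]
      _ < Cardinal.lift.{u + 1} lam :=
          Cardinal.lift_lt.2 (hinacc.isStrongLimit.two_power_lt hν)
  calc Cardinal.mk ↥{s : Set (Ordinal.{u} × Ordinal.{u} × Ordinal.{u}) |
        ∀ t ∈ s, t.1 < κ.ord ∧ t.2.1 < μ ∧ t.2.2 < μ}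
      ≤ Cardinal.mk (Set ↥Sμ) := h1
    _ = 2 ^ Cardinal.mk ↥Sμ := Cardinal.mk_set
    _ < Cardinal.lift.{u + 1} lam := h3

/-- A transfinite sequence picking at each step the least element of `D` above all
previously picked elements. -/
noncomputable def ordSeq (D : Set Ordinal.{u}) : Ordinal.{u} → Ordinal.{u} :=
  fun ν => sInf {δ | δ ∈ D ∧ ∀ ν' (_ : ν' < ν), ordSeq D ν' < δ}
termination_by ν => ν

lemma ordSeq_mem {D : Set Ordinal.{u}} {ν : Ordinal.{u}}
    (h : {δ | δ ∈ D ∧ ∀ ν' (_ : ν' < ν), ordSeq D ν' < δ}.Nonempty) :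
    ordSeq D ν ∈ D ∧ ∀ ν' (_ : ν' < ν), ordSeq D ν' < ordSeq D ν := by
  have heq : ordSeq D ν = sInf {δ | δ ∈ D ∧ ∀ ν' (_ : ν' < ν), ordSeq D ν' < δ} := by
    rw [ordSeq]
  have := csInf_mem h
  rw [← heq] at this
  exact this

theorem levy_collapse_chain_condition
    (κ lam : Cardinal.{u}) (hreg : κ.IsRegular) (hlt : κ < lam)
    (hinacc : lam.IsInaccessible)
    (A : Set (Set (Ordinal.{u} × Ordinal.{u} × Ordinal.{u})))
    (hA : ∀ p ∈ A, IsCollCond κ lam p)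
    (hanti : ∀ p ∈ A, ∀ q ∈ A, p ≠ q → ¬ CollCompat κ lam p q) :
    Cardinal.mk ↥A < Cardinal.lift.{u + 1} lam := by
  have hlamA : ℵ₀ < lam := hinacc.1
  have hlamreg : lam.IsRegular := hinacc.isRegular
  have hlamsl : lam.IsStrongLimit := hinacc.isStrongLimit
  have hlimit : Order.IsSuccLimit lam.ord := Cardinal.isSuccLimit_ord hlamA.le
  have hklam : Cardinal.lift.{u + 1} κ < Cardinal.lift.{u + 1} lam := Cardinal.lift_lt.2 hlt
  by_contra hcon
  have hAge : Cardinal.lift.{u + 1} lam ≤ Cardinal.mk ↥A := le_of_not_gt hcon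
  have hle : Cardinal.mk ↥(Iio lam.ord) ≤ Cardinal.mk ↥A := by
    rw [Ordinal.mk_Iio_ordinal, Cardinal.card_ord]; exact hAge
  obtain ⟨emb⟩ := (Cardinal.le_def _ _).1 hle
  -- an injective `lam.ord`-indexed family of members of the antichain
  obtain ⟨a, haA, hainj⟩ : ∃ a : Ordinal.{u} → Set (Ordinal.{u} × Ordinal.{u} × Ordinal.{u}),
      (∀ α, α < lam.ord → a α ∈ A) ∧
      (∀ α β, α < lam.ord → β < lam.ord → α ≠ β → a α ≠ a β) := by
    refine ⟨fun α => if h : α < lam.ord then (emb ⟨α, h⟩ : ↥A).1 else ∅, ?_, ?_⟩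
    · intro α h; simp only [dif_pos h]; exact (emb ⟨α, h⟩).2
    · intro α β hα hβ hne
      simp only [dif_pos hα, dif_pos hβ]
      intro h
      apply hne
      have h2 := emb.injective (Subtype.ext h : emb ⟨α, hα⟩ = emb ⟨β, hβ⟩)
      exact congrArg Subtype.val h2
  have hcond : ∀ {α}, α < lam.ord → IsCollCond κ lam (a α) :=
    fun {α} h => hA _ (haA _ h)
  -- THE CLAIM: there is `μ < lam.ord` such that for every `β < lam.ord`, unboundedly
  -- many conditions in the family have all their second coordinates in `Iio μ ∪ Ioi β`.
  have claim : ∃ μ < lam.ord, ∀ β < lam.ord, ∀ b < lam.ord,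
      ∃ α, α < lam.ord ∧ b < α ∧ ∀ t ∈ a α, t.2.1 < μ ∨ β < t.2.1 := by
    by_contra hC
    push_neg at hC
    choose! β hβ b hb H using hC
    set βb : Ordinal.{u} → Ordinal.{u} := fun μ => max μ (β μ) with hβbdef
    have hβblt : ∀ γ, γ < lam.ord → βb γ < lam.ord := fun γ hγ => max_lt hγ (hβ γ hγ)
    set D : Set Ordinal.{u} := {δ | δ < lam.ord ∧ ∀ γ < δ, βb γ < δ} with hDdef
    -- a step function for building elements of D
    have hstep : ∀ x, x < lam.ord → ∃ y, y < lam.ord ∧ x < y ∧ ∀ γ < x, βb γ < y := by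
      intro x hx
      obtain ⟨B, hB, hBle⟩ := aux_bdd hlamreg (βb '' Iio x)
        (lt_of_le_of_lt Cardinal.mk_image_le
          (by rw [Ordinal.mk_Iio_ordinal]; exact Cardinal.lift_lt.2 (Cardinal.lt_ord.1 hx)))
        (by rintro o ⟨γ, hγ, rfl⟩; exact hβblt γ (hγ.trans hx))
      refine ⟨max x B + 1, ?_, ?_, ?_⟩
      · rw [Ordinal.add_one_eq_succ]
        exact hlimit.succ_lt (max_lt hx hB)
      · rw [Ordinal.add_one_eq_succ]
        exact (le_max_left x B).trans_lt (Order.lt_succ _)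
      · intro γ hγ
        rw [Ordinal.add_one_eq_succ]
        exact ((hBle _ ⟨γ, hγ, rfl⟩).trans (le_max_right x B)).trans_lt (Order.lt_succ _)
    choose! step h1 h2 h3 using hstep
    -- D is unbounded in lam.ord
    have hDunb : ∀ x < lam.ord, ∃ δ ∈ D, x < δ := by
      intro x hx
      set g : ℕ → Ordinal.{u} := fun n => Nat.rec (x + 1) (fun _ ih => step ih) n with hg
      have hg0 : g 0 = x + 1 := rfl
      have hgs : ∀ n, g (n + 1) = step (g n) := fun n => rfl
      have hglt : ∀ n, g n < lam.ord := by
        intro n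
        induction n with
        | zero => rw [hg0, Ordinal.add_one_eq_succ]; exact hlimit.succ_lt hx
        | succ n ih => rw [hgs]; exact h1 _ ih
      have hsmall : Small.{u} ℕ := small_lift ℕ
      have hδ : iSup g < lam.ord := by
        refine Cardinal.iSup_lt_ord_lift_of_isRegular hlamreg ?_ hglt
        simpa using hlamA
      refine ⟨iSup g, ⟨hδ, ?_⟩, ?_⟩
      · intro γ hγ
        rw [Ordinal.lt_iSup_iff] at hγ
        obtain ⟨n, hn⟩ := hγ
        calc βb γ < step (g n) := h3 _ (hglt n) _ hn
          _ = g (n + 1) := (hgs n).symm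
          _ ≤ iSup g := Ordinal.le_iSup g (n + 1)
      · calc x < x + 1 := by
              rw [Ordinal.add_one_eq_succ]; exact Order.lt_succ x
          _ = g 0 := rfl
          _ ≤ iSup g := Ordinal.le_iSup g 0
    -- the increasing κ-sequence through D
    have hseq : ∀ ν, ν < κ.ord →
        (ordSeq D ν ∈ D ∧ ∀ ν' (_ : ν' < ν), ordSeq D ν' < ordSeq D ν) := by
      intro ν
      induction ν using Ordinal.induction with
      | h ν IH =>
        intro hν
        obtain ⟨B, hB, hBle⟩ := aux_bdd hlamreg (ordSeq D '' Iio ν)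
          (lt_of_le_of_lt Cardinal.mk_image_le
            (by rw [Ordinal.mk_Iio_ordinal]
                exact Cardinal.lift_lt.2
                  ((Cardinal.lt_ord.1 (hν.trans (Cardinal.ord_lt_ord.2 hlt))))))
          (by rintro o ⟨ν', hν', rfl⟩
              exact ((IH ν' hν' (hν'.trans hν)).1).1)
        obtain ⟨δ, hδD, hδB⟩ := hDunb B hB
        exact ordSeq_mem ⟨δ, hδD, fun ν' hν' => (hBle _ ⟨ν', hν', rfl⟩).trans_lt hδB⟩
    have hseqlt : ∀ ν, ν < κ.ord → ordSeq D ν < lam.ord :=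
      fun ν hν => ((hseq ν hν).1).1
    -- choose an index avoiding all the bounds
    obtain ⟨B, hB, hBle⟩ := aux_bdd hlamreg ((fun ν => b (ordSeq D ν)) '' Iio κ.ord)
      (lt_of_le_of_lt Cardinal.mk_image_le
        (by rw [Ordinal.mk_Iio_ordinal, Cardinal.card_ord]
            exact hklam))
      (by rintro o ⟨ν, hν, rfl⟩; exact hb _ (hseqlt ν hν))
    have hα : B + 1 < lam.ord := by
      rw [Ordinal.add_one_eq_succ]; exact hlimit.succ_lt hB
    have hbig : ∀ ν, ν < κ.ord → ∃ t ∈ a (B + 1),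
        ordSeq D ν ≤ t.2.1 ∧ t.2.1 ≤ β (ordSeq D ν) := by
      intro ν hν
      refine H (ordSeq D ν) (hseqlt ν hν) (B + 1) hα ?_
      calc b (ordSeq D ν) ≤ B := hBle _ ⟨ν, hν, rfl⟩
        _ < B + 1 := by rw [Ordinal.add_one_eq_succ]; exact Order.lt_succ B
    choose! tf htf1 htf2 htf3 using hbig
    -- the tf's are pairwise distinct, giving κ-many elements of a (B+1)
    have hdist : ∀ ν ν', ν < κ.ord → ν' < κ.ord → ν < ν' → tf ν ≠ tf ν' := by
      intro ν ν' hν hν' hlt' hEq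
      have h1' : (tf ν).2.1 ≤ βb (ordSeq D ν) :=
        (htf3 ν hν).trans (le_max_right _ _)
      have h2' : βb (ordSeq D ν) < ordSeq D ν' :=
        ((hseq ν' hν').1).2 _ ((hseq ν' hν').2 ν hlt')
      have h3' : ordSeq D ν' ≤ (tf ν').2.1 := htf2 ν' hν'
      have : (tf ν).2.1 < (tf ν').2.1 := h1'.trans_lt (h2'.trans_le h3')
      rw [hEq] at this
      exact lt_irrefl _ this
    have hembed : Cardinal.lift.{u + 1} κ ≤ Cardinal.mk ↥(a (B + 1)) := by
      rw [← Cardinal.card_ord κ, ← Ordinal.mk_Iio_ordinal]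
      refine ⟨⟨fun ν => ⟨tf ν.1, htf1 ν.1 ν.2⟩, ?_⟩⟩
      rintro ⟨ν, hν⟩ ⟨ν', hν'⟩ h
      simp only [Subtype.mk.injEq] at h ⊢
      rcases lt_trichotomy ν ν' with h' | h' | h'
      · exact absurd h (hdist ν ν' hν hν' h')
      · exact h'
      · exact absurd h.symm (hdist ν' ν hν' hν h')
    exact absurd (hcond hα).1 (not_lt.mpr hembed)
  -- use the claim
  obtain ⟨μ, hμ, hclaim⟩ := claim
  set V : Set (Set (Ordinal.{u} × Ordinal.{u} × Ordinal.{u})) :=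
    {s | ∀ t ∈ s, t.1 < κ.ord ∧ t.2.1 < μ ∧ t.2.2 < μ} with hVdef
  have hV : Cardinal.mk ↥V < Cardinal.lift.{u + 1} lam := aux_count κ lam hlt hinacc hμ
  set low : Set (Ordinal.{u} × Ordinal.{u} × Ordinal.{u}) →
      Set (Ordinal.{u} × Ordinal.{u} × Ordinal.{u}) := fun s => {t ∈ s | t.2.1 < μ}
    with hlowdef
  have hlowV : ∀ α, α < lam.ord → low (a α) ∈ V := by
    intro α hα t ht
    obtain ⟨ht1, ht2⟩ := ht
    obtain ⟨hb1, _, hb3⟩ := (hcond hα).2.1 t ht1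
    exact ⟨hb1, ht2, hb3.trans ht2⟩
  -- for each β, pigeonhole within the unbounded set given by the claim
  have hper : ∀ β, β < lam.ord → ∃ r, ∀ b < lam.ord,
      ∃ α ∈ {α | α < lam.ord ∧ ∀ t ∈ a α, t.2.1 < μ ∨ β < t.2.1},
        low (a α) = r ∧ b < α := by
    intro β hβ
    refine aux_pigeon hlamreg V hV
      {α | α < lam.ord ∧ ∀ t ∈ a α, t.2.1 < μ ∨ β < t.2.1}
      (fun α => low (a α)) (fun α hα => hlowV α hα.1) ?_
    intro bb hbb
    obtain ⟨α, hα1, hα2, hα3⟩ := hclaim β hβ bb hbb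
    exact ⟨α, ⟨hα1, hα3⟩, hα2⟩
  choose! r hr using hper
  -- pigeonhole over β
  have hrV : ∀ β ∈ Iio lam.ord, r β ∈ V := by
    intro β hβ
    obtain ⟨α, hα, hval, _⟩ :=
      hr β hβ 0 (lt_of_le_of_lt (by simp) hμ)
    rw [← hval]
    exact hlowV α hα.1
  obtain ⟨rstar, hW⟩ := aux_pigeon hlamreg V hV (Iio lam.ord) r hrV
    (fun bb hbb => ⟨bb + 1, by
      rw [Ordinal.add_one_eq_succ]; exact hlimit.succ_lt hbb, by
      rw [Ordinal.add_one_eq_succ]; exact Order.lt_succ bb⟩)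
  -- pick β₁ and the first condition p = a α₁
  obtain ⟨β₁, hβ₁lt, hrβ₁, hμβ₁⟩ := hW μ hμ
  obtain ⟨α₁, hα₁mem, hlow₁, _⟩ := hr β₁ hβ₁lt μ hμ
  obtain ⟨hα₁lt, hα₁high⟩ := hα₁mem
  -- bound the second coordinates of p
  obtain ⟨B₁, hB₁lt, hB₁le⟩ := aux_bdd hlamreg ((fun t => t.2.1) '' (a α₁))
    (lt_of_le_of_lt Cardinal.mk_image_le ((hcond hα₁lt).1.trans hklam))
    (by rintro o ⟨t, ht, rfl⟩; exact ((hcond hα₁lt).2.1 t ht).2.1)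
  -- pick β₂ > B₁ and a second condition q = a α₂ with α₂ > α₁
  obtain ⟨β₂, hβ₂lt, hrβ₂, hB₁β₂⟩ := hW B₁ hB₁lt
  obtain ⟨α₂, hα₂mem, hlow₂, hα₁α₂⟩ := hr β₂ hβ₂lt α₁ hα₁lt
  obtain ⟨hα₂lt, hα₂high⟩ := hα₂mem
  -- the two conditions
  have hne : a α₁ ≠ a α₂ := hainj α₁ α₂ hα₁lt hα₂lt (ne_of_lt hα₁α₂)
  have hlows : low (a α₁) = low (a α₂) := by rw [hlow₁, hlow₂, hrβ₁, hrβ₂]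
  -- their union is a condition
  have hc₁ := hcond hα₁lt
  have hc₂ := hcond hα₂lt
  have hcompat : CollCompat κ lam (a α₁) (a α₂) := by
    refine ⟨a α₁ ∪ a α₂, ⟨?_, ?_, ?_⟩, subset_union_left, subset_union_right⟩
    · refine lt_of_le_of_lt (Cardinal.mk_union_le _ _) ?_
      exact Cardinal.add_lt_of_lt (Cardinal.aleph0_le_lift.2 hreg.1) hc₁.1 hc₂.1
    · intro t ht
      rcases ht with ht | ht
      · exact hc₁.2.1 t ht
      · exact hc₂.2.1 t ht
    · -- functionality of the union
      have key : ∀ t ∈ a α₁, ∀ t' ∈ a α₂, t.1 = t'.1 → t.2.1 = t'.2.1 → t.2.2 = t'.2.2 := by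
        intro t ht t' ht' he1 he2
        by_cases hc : t.2.1 < μ
        · -- t is in the common low part, so t ∈ a α₂
          have htlow : t ∈ low (a α₁) := ⟨ht, hc⟩
          rw [hlows] at htlow
          exact hc₂.2.2 t htlow.1 t' ht' he1 he2
        · -- impossible: t' has high rank > β₂ > B₁ ≥ rank of t
          exfalso
          have h2' : ¬ t'.2.1 < μ := by rw [← he2]; exact hc
          have hhigh := (hα₂high t' ht').resolve_left h2'
          have hle' : t.2.1 ≤ B₁ := hB₁le _ ⟨t, ht, rfl⟩
          rw [he2] at hle'
          exact absurd (hB₁β₂.trans hhigh) (not_lt.mpr hle')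
      intro t ht t' ht' he1 he2
      rcases ht with ht | ht <;> rcases ht' with ht' | ht'
      · exact hc₁.2.2 t ht t' ht' he1 he2
      · exact key t ht t' ht' he1 he2
      · exact (key t' ht' t ht he1.symm he2.symm).symm
      · exact hc₂.2.2 t ht t' ht' he1 he2
  exact hanti _ (haA _ hα₁lt) _ (haA _ hα₂lt) hne hcompat
end

section
/- Let $\lambda$ be inaccessible, $\mu < \kappa = \mu^+ < \lambda$ regular cardinals, and $\mathbb{P}$ a poset of cardinality $\lambda$ such that $\Vdash_{\mathbb{P}} |\alpha| \leq \mu$ for all $\alpha \in [\kappa, \lambda)$. If $\mathbb{P}$ has the weak $(\kappa,\lambda)$-c.c., then $\Vdash_{\mathbb{P}}$ "$\lambda$ is a regular cardinal". -/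
universe u

def Compat {P : Type u} [Preorder P] (p q : P) : Prop := ∃ r, r ≤ p ∧ r ≤ q

def IsAntichainIn {P : Type u} [Preorder P] (A : Set P) : Prop :=
  ∀ p ∈ A, ∀ q ∈ A, p ≠ q → ¬ Compat p q

/-- The weak `(κ, λ)`-chain condition. -/
def WeakCC (P : Type u) [Preorder P] (κ lam : Cardinal.{u}) : Prop :=
  ∀ (ι : Type u) (A : ι → Set P), Cardinal.mk ι < κ → (∀ i, IsAntichainIn (A i)) →
    ∀ p : P, ∃ q ≤ p, ∀ i, Cardinal.mk ↥{r ∈ A i | Compat r q} < lam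

/-- `F` is a `P`-name for a function from (the ordinals below) `γ` to (the ordinals
below) `bound`: `F i α` is the downward closed set of conditions forcing the value at
`i` to be `α`; values are decided incompatibly and densely. -/
def IsOrdFuncName {P : Type u} [Preorder P] (γ bound : Ordinal.{u})
    (F : Ordinal.{u} → Ordinal.{u} → Set P) : Prop :=
  (∀ i α, ∀ q r : P, q ≤ r → r ∈ F i α → q ∈ F i α) ∧
  (∀ i α β, α ≠ β → ∀ q ∈ F i α, ∀ r ∈ F i β, ¬ Compat q r) ∧
  (∀ i < γ, ∀ p : P, ∃ r ≤ p, ∃ α < bound, r ∈ F i α) ∧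
  (∀ i α, (F i α).Nonempty → i < γ ∧ α < bound)

/-- `⊩_P "λ is a regular cardinal"`: for every name for a function from some `γ < λ`
into `λ` and every condition, some extension forces the range to be bounded. -/
def ForcesRegular (P : Type u) [Preorder P] (lam : Cardinal.{u}) : Prop :=
  ∀ γ < lam.ord, ∀ F : Ordinal.{u} → Ordinal.{u} → Set P, IsOrdFuncName γ lam.ord F →
    ∀ p : P, ∃ q ≤ p, ∃ β < lam.ord, ∀ i αo, β ≤ αo → ∀ r ≤ q, r ∉ F i αo

/-- `⊩_P |α| ≤ μ`: there is a name for a surjection from `μ` onto `α`. -/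
def ForcesCollapseToMu (P : Type u) [Preorder P] (mu : Cardinal.{u})
    (α : Ordinal.{u}) : Prop :=
  ∃ F : Ordinal.{u} → Ordinal.{u} → Set P, IsOrdFuncName mu.ord α F ∧
    ∀ β < α, ∀ p : P, ∃ r ≤ p, ∃ i < mu.ord, r ∈ F i β

lemma compat_symm {P : Type u} [Preorder P] {p q : P} (h : Compat p q) : Compat q p := by
  obtain ⟨r, h1, h2⟩ := h; exact ⟨r, h2, h1⟩

lemma compat_self {P : Type u} [Preorder P] (p : P) : Compat p p := ⟨p, le_rfl, le_rfl⟩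

/-- Every set of conditions contains a maximal antichain: every element of `D` is
compatible with some element of the antichain. -/
lemma exists_maximal_antichain {P : Type u} [Preorder P] (D : Set P) :
    ∃ A ⊆ D, IsAntichainIn A ∧ ∀ s ∈ D, ∃ a ∈ A, Compat s a := by
  have hzorn : ∀ c ⊆ {A : Set P | A ⊆ D ∧ IsAntichainIn A}, IsChain (· ⊆ ·) c →
      ∃ ub ∈ {A : Set P | A ⊆ D ∧ IsAntichainIn A}, ∀ s ∈ c, s ⊆ ub := by
    intro c hcS hchain
    refine ⟨⋃₀ c, ⟨Set.sUnion_subset fun A hA => (hcS hA).1, ?_⟩, fun s hs => Set.subset_sUnion_of_mem hs⟩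
    intro p hp q hq hpq
    obtain ⟨A1, hA1c, hpA1⟩ := hp
    obtain ⟨A2, hA2c, hqA2⟩ := hq
    rcases hchain.total hA1c hA2c with hsub | hsub
    · exact (hcS hA2c).2 p (hsub hpA1) q hqA2 hpq
    · exact (hcS hA1c).2 p hpA1 q (hsub hqA2) hpq
  obtain ⟨A, hA⟩ := zorn_subset {A : Set P | A ⊆ D ∧ IsAntichainIn A} hzorn
  · refine ⟨A, hA.prop.1, hA.prop.2, fun s hs => ?_⟩
    by_contra h
    push_neg at h
    have hsA : s ∉ A := fun hsA => h s hsA (compat_self s)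
    have hmem : A ∪ {s} ∈ {A : Set P | A ⊆ D ∧ IsAntichainIn A} := by
      constructor
      · exact Set.union_subset hA.prop.1 (by simpa using hs)
      · intro p hp q hq hpq
        rcases hp with hp | hp <;> rcases hq with hq | hq
        · exact hA.prop.2 p hp q hq hpq
        · rw [Set.mem_singleton_iff] at hq; subst hq
          exact fun hc => h p hp (compat_symm hc)
        · rw [Set.mem_singleton_iff] at hp; subst hp
          exact fun hc => h q hq hc
        · rw [Set.mem_singleton_iff] at hp hq; subst hp; subst hq; exact absurd rfl hpq
    have := hA.2 hmem Set.subset_union_left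
    exact hsA (this (by simp))

/-- Key lemma: a name on a domain of size `< κ` with values below `lam.ord` has its
values forced bounded below `lam.ord` below some extension of any condition. -/
lemma key_bound {P : Type u} [Preorder P] {κ lam : Cardinal.{u}}
    (hwcc : WeakCC P κ lam) (hκlam : κ < lam) (hreg : lam.IsRegular)
    {δ : Ordinal.{u}} (hδ : δ < κ.ord)
    {K : Ordinal.{u} → Ordinal.{u} → Set P} (hK : IsOrdFuncName δ lam.ord K) (p : P) :
    ∃ q ≤ p, ∃ β < lam.ord, ∀ j αo, β ≤ αo → ∀ s ≤ q, s ∉ K j αo := by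
  obtain ⟨hdown, hincomp, hdense, hbound⟩ := hK
  let e := Ordinal.ToType.mk (o := δ)
  let f : δ.ToType → Ordinal.{u} := fun i => (e.symm i : Ordinal)
  have hf_surj : ∀ j < δ, ∃ i, f i = j := fun j hj => ⟨e ⟨j, hj⟩, by simp [f]⟩
  let D : δ.ToType → Set P := fun i => {s | ∃ α, s ∈ K (f i) α}
  have hmax : ∀ i, ∃ A ⊆ D i, IsAntichainIn A ∧ ∀ s ∈ D i, ∃ a ∈ A, Compat s a :=
    fun i => exists_maximal_antichain _
  choose A hAD hAanti hAmax using hmax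
  have hmkι : Cardinal.mk δ.ToType < κ := by
    rw [Cardinal.mk_toType]; exact Cardinal.lt_ord.mp hδ
  obtain ⟨q, hqp, hq⟩ := hwcc δ.ToType A hmkι hAanti p
  let B : δ.ToType → Set P := fun i => {r ∈ A i | Compat r q}
  have hvalex : ∀ x : Σ i, ↥(B i), ∃ α, (x.2 : P) ∈ K (f x.1) α :=
    fun x => hAD x.1 x.2.2.1
  choose val hvalK using hvalex
  have hmkσ : Cardinal.mk (Σ i, ↥(B i)) < lam := by
    rw [Cardinal.mk_sigma]
    exact Cardinal.sum_lt_of_isRegular hreg (hmkι.trans hκlam) (fun i => hq i)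
  have hvallt : ∀ x : Σ i, ↥(B i), val x + 1 < lam.ord := by
    intro x
    have h1 := (hbound _ _ ⟨_, hvalK x⟩).2
    rw [Ordinal.add_one_eq_succ]
    exact (Cardinal.isSuccLimit_ord hreg.aleph0_le).succ_lt h1
  have hβlt : (⨆ x : Σ i, ↥(B i), val x + 1) < lam.ord :=
    Ordinal.iSup_lt_ord (by rw [hreg.cof_eq]; exact hmkσ) hvallt
  refine ⟨q, hqp, _, hβlt, ?_⟩
  intro j αo hβαo s hsq hsK
  have hjδ : j < δ := (hbound j αo ⟨s, hsK⟩).1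
  obtain ⟨i, rfl⟩ := hf_surj j hjδ
  obtain ⟨a, haA, hcomp⟩ := hAmax i s ⟨αo, hsK⟩
  obtain ⟨t, hts, hta⟩ := hcomp
  have haB : a ∈ B i := ⟨haA, t, hta, hts.trans hsq⟩
  have hαeq : val ⟨i, ⟨a, haB⟩⟩ = αo := by
    by_contra hne
    exact hincomp (f i) _ αo hne t
      (hdown _ _ _ _ hta (hvalK ⟨i, ⟨a, haB⟩⟩)) t (hdown _ _ _ _ hts hsK) (compat_self t)
  have hlt : αo < ⨆ x : Σ i, ↥(B i), val x + 1 := by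
    have h1 : val ⟨i, ⟨a, haB⟩⟩ + 1 ≤ ⨆ x : Σ i, ↥(B i), val x + 1 :=
      le_ciSup (Ordinal.bddAbove_range _) (⟨i, ⟨a, haB⟩⟩ : Σ i, ↥(B i))
    rw [hαeq] at h1
    exact lt_of_lt_of_le (Order.lt_succ αo) (by rwa [← Ordinal.add_one_eq_succ])
  exact absurd hβαo (not_le.mpr hlt)

/-- under the stated hypotheses, the weak `(κ, λ)`-c.c. implies that
`ℙ` forces `λ` to be a regular cardinal. -/
theorem weakCC_forces_regular
    (mu κ lam : Cardinal.{u}) (P : Type u) [Preorder P]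
    (hmureg : mu.IsRegular) (hκ : κ = Order.succ mu) (hκreg : κ.IsRegular)
    (hκlam : κ < lam) (hinacc : lam.IsInaccessible)
    (hP : Cardinal.mk P = lam)
    (hcoll : ∀ α : Ordinal.{u}, κ.ord ≤ α → α < lam.ord → ForcesCollapseToMu P mu α)
    (hwcc : WeakCC P κ lam) :
    ForcesRegular P lam := by
  have hreg : lam.IsRegular := hinacc.isRegular
  intro γ hγ F hF p
  rcases lt_or_ge γ κ.ord with hγκ | hγκ
  · exact key_bound hwcc hκlam hreg hγκ hF p
  · obtain ⟨G, hG, hGsurj⟩ := hcoll γ hγκ hγ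
    set H : Ordinal.{u} → Ordinal.{u} → Set P :=
      fun j α => {r | ∃ i, r ∈ G j i ∧ r ∈ F i α} with hH
    have hHname : IsOrdFuncName mu.ord lam.ord H := by
      refine ⟨?_, ?_, ?_, ?_⟩
      · rintro j α q r hqr ⟨i, h1, h2⟩
        exact ⟨i, hG.1 _ _ _ _ hqr h1, hF.1 _ _ _ _ hqr h2⟩
      · rintro j α β hne q' ⟨i1, hq1, hq2⟩ r' ⟨i2, hr1, hr2⟩ ⟨t, htq, htr⟩
        rcases eq_or_ne i1 i2 with rfl | hi
        · exact hF.2.1 i1 α β hne t (hF.1 _ _ _ _ htq hq2) t (hF.1 _ _ _ _ htr hr2)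
            (compat_self t)
        · exact hG.2.1 j i1 i2 hi t (hG.1 _ _ _ _ htq hq1) t (hG.1 _ _ _ _ htr hr1)
            (compat_self t)
      · intro j hj p'
        obtain ⟨r, hrp, i, hiγ, hriG⟩ := hG.2.2.1 j hj p'
        obtain ⟨s, hsr, α, hα, hsF⟩ := hF.2.2.1 i hiγ r
        exact ⟨s, hsr.trans hrp, α, hα, ⟨i, hG.1 _ _ _ _ hsr hriG, hsF⟩⟩
      · rintro j α ⟨r, i, h1, h2⟩
        exact ⟨(hG.2.2.2 j i ⟨r, h1⟩).1, (hF.2.2.2 i α ⟨r, h2⟩).2⟩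
    have hmuκ : mu.ord < κ.ord := by
      rw [Cardinal.ord_lt_ord, hκ]; exact Order.lt_succ mu
    obtain ⟨q, hqp, β, hβ, hbnd⟩ := key_bound hwcc hκlam hreg hmuκ hHname p
    refine ⟨q, hqp, β, hβ, ?_⟩
    intro i αo hβαo r hrq hrF
    have hiγ : i < γ := (hF.2.2.2 i αo ⟨r, hrF⟩).1
    obtain ⟨s, hsr, j, hjmu, hsG⟩ := hGsurj i hiγ r
    exact hbnd j αo hβαo s (hsr.trans hrq) ⟨i, hsG, hF.1 i αo s r hsr hrF⟩
end

section
/- Let $\kappa \leq \mu < \lambda$ with $\kappa$ regular, $\mu$ and $\lambda$ inaccessible. Let $Y$ be the set of $x \in \mathcal{P}_\kappa(V_{\mu+1})$ such that for every maximal antichain $\mathcal{A} \in x$ of the stationary tower forcing $\mathbb{Q}^\kappa_\mu$, there is $X \in \mathcal{A} \cap x$ with $x \cap \bigcup X \in X$. If $Y$ is stationary, then $Y$ forces, in the stationary tower forcing $\mathbb{Q}^\kappa_\lambda$, that the restriction of the generic filter to $\mathbb{Q}^\kappa_\mu$ is $\mathbb{Q}^\kappa_\mu$-generic over $V$. -/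
universe u

/-- `x` has cardinality less than `κ`. -/
def zsmall (κ : Cardinal.{u}) (x : ZFSet.{u}) : Prop :=
  Cardinal.mk ↥x.toSet < Cardinal.lift.{u + 1} κ

/-- The class `V_α` of sets of rank below `α`. -/
def Vlt (α : Ordinal.{u}) : Set ZFSet.{u} := {y | y.rank < α}

/-- `x ∈ 𝒫_κ(V_α)`. -/
def inPk (κ : Cardinal.{u}) (α : Ordinal.{u}) (x : ZFSet.{u}) : Prop :=
  zsmall κ x ∧ x.toSet ⊆ Vlt α

/-- `C` is closed under unions of `⊆`-increasing chains of length `< κ`. -/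
def zClosed (κ : Cardinal.{u}) (C : Set ZFSet.{u}) : Prop :=
  ∀ γ : Ordinal.{u}, γ ≠ 0 → γ.card < κ →
    ∀ z : Ordinal.{u} → ZFSet.{u},
      (∀ i j : Ordinal.{u}, i ≤ j → j < γ → z i ⊆ z j) →
      (∀ i < γ, z i ∈ C) →
      ∀ w : ZFSet.{u}, (∀ t, t ∈ w ↔ ∃ i < γ, t ∈ z i) → w ∈ C

def zUnbounded (κ : Cardinal.{u}) (α : Ordinal.{u}) (C : Set ZFSet.{u}) : Prop :=
  ∀ x : ZFSet.{u}, inPk κ α x → ∃ z ∈ C, x ⊆ z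

/-- `C` is club in `𝒫_κ(V_α)`. -/
def zClub (κ : Cardinal.{u}) (α : Ordinal.{u}) (C : Set ZFSet.{u}) : Prop :=
  (∀ y ∈ C, inPk κ α y) ∧ zClosed κ C ∧ zUnbounded κ α C

/-- `S` is stationary in `𝒫_κ(V_α)`. -/
def zStationary (κ : Cardinal.{u}) (α : Ordinal.{u}) (S : Set ZFSet.{u}) : Prop :=
  (∀ y ∈ S, inPk κ α y) ∧ ∀ C : Set ZFSet.{u}, zClub κ α C → ∃ y, y ∈ S ∧ y ∈ C

/-- `X` is a condition of the stationary tower forcing `ℚ^κ_h`: a stationary subset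
of some `𝒫_κ(V_α)` with `κ ≤ α < h`. -/
def QCond (κ : Cardinal.{u}) (h : Ordinal.{u}) (X : ZFSet.{u}) : Prop :=
  ∃ α : Ordinal.{u}, κ.ord ≤ α ∧ α < h ∧ zStationary κ α X.toSet

/-- The stationary tower order: almost every lifted element of `X` restricts into
`Y`. -/
def QLe (κ : Cardinal.{u}) (X Y : ZFSet.{u}) : Prop :=
  ∃ α : Ordinal.{u}, (ZFSet.sUnion X).rank ≤ α ∧ (ZFSet.sUnion Y).rank ≤ α ∧
    ¬ zStationary κ α
      {x : ZFSet.{u} | inPk κ α x ∧ x ∩ ZFSet.sUnion X ∈ X ∧ x ∩ ZFSet.sUnion Y ∉ Y}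

def QCompat (κ : Cardinal.{u}) (h : Ordinal.{u}) (X Y : ZFSet.{u}) : Prop :=
  ∃ Z : ZFSet.{u}, QCond κ h Z ∧ QLe κ Z X ∧ QLe κ Z Y

/-- `A` is a maximal antichain in `ℚ^κ_h`. -/
def QMaxAntichain (κ : Cardinal.{u}) (h : Ordinal.{u}) (A : ZFSet.{u}) : Prop :=
  (∀ X ∈ A, QCond κ h X) ∧
  (∀ X ∈ A, ∀ Y ∈ A, X ≠ Y → ¬ QCompat κ h X Y) ∧
  (∀ Z : ZFSet.{u}, QCond κ h Z → ∃ X ∈ A, QCompat κ h X Z)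


theorem ZFSet.mem_toSet (a u : ZFSet.{u}) : a ∈ u.toSet ↔ a ∈ u := Iff.rfl

theorem ZFSet.toSet_injective : Function.Injective (ZFSet.toSet.{u}) :=
  fun x y h => ZFSet.ext fun z => by
    rw [← ZFSet.mem_toSet, h, ZFSet.mem_toSet]

theorem ZFSet.toSet_empty : (∅ : ZFSet.{u}).toSet = ∅ :=
  Set.eq_empty_of_forall_notMem fun a h => ZFSet.notMem_empty a h

noncomputable section AuxST

namespace STAux
open Cardinal Set

universe v

/-- Smallness for sets of ZFC sets. -/
def sSmall (κ : Cardinal.{u}) (s : Set ZFSet.{u}) : Prop :=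
  Cardinal.mk ↥s < Cardinal.lift.{u + 1} κ

theorem zsmall_iff_sSmall {κ : Cardinal.{u}} {x : ZFSet.{u}} :
    zsmall κ x ↔ sSmall κ x.toSet := Iff.rfl

theorem lift_isRegular {κ : Cardinal.{u}} (h : κ.IsRegular) :
    (Cardinal.lift.{u + 1} κ).IsRegular := by
  constructor
  · simpa using Cardinal.lift_le.{u+1}.mpr h.1
  · rw [← Cardinal.lift_ord, ← Ordinal.lift_cof]
    exact Cardinal.lift_le.mpr h.2

variable {κ : Cardinal.{u}} (hκ : κ.IsRegular)

theorem aleph0_le_lift' (hκ : κ.IsRegular) : ℵ₀ ≤ Cardinal.lift.{u + 1} κ :=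
  (lift_isRegular hκ).1

theorem sSmall_mono {s t : Set ZFSet.{u}} (h : s ⊆ t) (ht : sSmall κ t) : sSmall κ s :=
  lt_of_le_of_lt (Cardinal.mk_le_mk_of_subset h) ht

theorem sSmall_empty (hκ : κ.IsRegular) : sSmall κ (∅ : Set ZFSet.{u}) := by
  have : Cardinal.mk ↥(∅ : Set ZFSet.{u}) = 0 := Cardinal.mk_emptyCollection _
  rw [sSmall, this]
  exact lt_of_lt_of_le Cardinal.aleph0_pos (aleph0_le_lift' hκ)

theorem sSmall_union (hκ : κ.IsRegular) {s t : Set ZFSet.{u}} (hs : sSmall κ s)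
    (ht : sSmall κ t) : sSmall κ (s ∪ t) :=
  lt_of_le_of_lt (Cardinal.mk_union_le s t) (Cardinal.add_lt_of_lt (aleph0_le_lift' hκ) hs ht)

theorem sSmall_singleton (hκ : κ.IsRegular) (a : ZFSet.{u}) : sSmall κ ({a} : Set ZFSet.{u}) := by
  have : Cardinal.mk ↥({a} : Set ZFSet.{u}) = 1 := Cardinal.mk_singleton a
  rw [sSmall, this]
  exact lt_of_lt_of_le Cardinal.one_lt_aleph0 (aleph0_le_lift' hκ)

theorem sSmall_iUnion (hκ : κ.IsRegular) {ι : Type (u + 1)} (f : ι → Set ZFSet.{u})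
    (hι : Cardinal.mk ι < Cardinal.lift.{u + 1} κ) (hf : ∀ i, sSmall κ (f i)) :
    sSmall κ (⋃ i, f i) := by
  refine lt_of_le_of_lt (Cardinal.mk_iUnion_le f) ?_
  exact Cardinal.mul_lt_of_lt (aleph0_le_lift' hκ) hι
    (Cardinal.iSup_lt_of_isRegular (lift_isRegular hκ) hι hf)

/-- restriction of a ZF set to elements of rank `< δ`. -/
def restr (δ : Ordinal.{u}) (x : ZFSet.{u}) : ZFSet.{u} :=
  ZFSet.sep (fun t => t.rank < δ) x

theorem mem_restr {δ : Ordinal.{u}} {x t : ZFSet.{u}} :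
    t ∈ restr δ x ↔ t ∈ x ∧ t.rank < δ := ZFSet.mem_sep

theorem restr_subset {δ : Ordinal.{u}} {x : ZFSet.{u}} : restr δ x ⊆ x :=
  fun t ht => (mem_restr.mp ht).1

theorem toSet_restr (δ : Ordinal.{u}) (x : ZFSet.{u}) :
    (restr δ x).toSet = x.toSet ∩ Vlt δ := by
  ext t; exact mem_restr

theorem restr_eq_self {δ : Ordinal.{u}} {x : ZFSet.{u}} (h : x.toSet ⊆ Vlt δ) :
    restr δ x = x := by
  apply ZFSet.ext; intro t
  rw [mem_restr]
  exact ⟨fun ht => ht.1, fun ht => ⟨ht, h ht⟩⟩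

theorem restr_restr {δ β : Ordinal.{u}} (h : δ ≤ β) (x : ZFSet.{u}) :
    restr δ (restr β x) = restr δ x := by
  apply ZFSet.ext; intro t
  simp only [mem_restr]
  exact ⟨fun ht => ⟨ht.1.1, ht.2⟩, fun ht => ⟨⟨ht.1, lt_of_lt_of_le ht.2 h⟩, ht.2⟩⟩

theorem restr_toSet_subset (δ : Ordinal.{u}) (x : ZFSet.{u}) :
    (restr δ x).toSet ⊆ Vlt δ := by
  intro t ht; exact (mem_restr.mp ht).2

theorem inPk_restr {β δ : Ordinal.{u}} {x : ZFSet.{u}} (h : inPk κ β x) :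
    inPk κ δ (restr δ x) :=
  ⟨sSmall_mono (by rw [toSet_restr]; exact Set.inter_subset_left) h.1, restr_toSet_subset δ x⟩

theorem inPk_mono {β δ : Ordinal.{u}} {x : ZFSet.{u}} (hδβ : δ ≤ β) (h : inPk κ δ x) :
    inPk κ β x :=
  ⟨h.1, fun t ht => lt_of_lt_of_le (h.2 ht) hδβ⟩

theorem inter_eq_restr {δ : Ordinal.{u}} {u x : ZFSet.{u}} (hu : u.toSet = Vlt δ) :
    x ∩ u = restr δ x := by
  apply ZFSet.ext; intro t
  rw [ZFSet.mem_inter, mem_restr]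
  constructor
  · rintro ⟨h1, h2⟩; exact ⟨h1, by have : t ∈ u.toSet := h2; rwa [hu] at this⟩
  · rintro ⟨h1, h2⟩; refine ⟨h1, ?_⟩
    have : t ∈ u.toSet := by rw [hu]; exact h2
    exact this

end STAux
end AuxST

noncomputable section AuxST2
namespace STAux
open Cardinal Set

/-- The von Neumann hierarchy as ZF sets. -/
noncomputable def vz : Ordinal.{u} → ZFSet.{u}
  | β => ZFSet.sUnion (ZFSet.range fun i : β.ToType =>
      ZFSet.powerset (vz ((Ordinal.ToType.mk (o := β)).symm i).1))
  termination_by β => β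
  decreasing_by exact ((Ordinal.ToType.mk (o := β)).symm i).2

theorem mem_vz_iff : ∀ (β : Ordinal.{u}) (x : ZFSet.{u}), x ∈ vz β ↔ x.rank < β := by
  intro β
  induction β using Ordinal.induction with
  | h β IH =>
    intro x
    rw [vz]
    simp only [ZFSet.mem_sUnion, ZFSet.mem_range]
    constructor
    · rintro ⟨z, ⟨i, rfl⟩, hx⟩
      rw [ZFSet.mem_powerset] at hx
      set ξ := ((Ordinal.ToType.mk (o := β)).symm i)
      have hrank : x.rank ≤ ξ.1 := by
        rw [ZFSet.rank_le_iff]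
        intro y hy
        have := hx hy
        rw [IH ξ.1 ξ.2 y] at this
        exact this
      exact lt_of_le_of_lt hrank ξ.2
    · intro hx
      refine ⟨ZFSet.powerset (vz x.rank), ⟨(Ordinal.ToType.mk (o := β)) ⟨x.rank, hx⟩, ?_⟩, ?_⟩
      · congr 2
        simp
      · rw [ZFSet.mem_powerset]
        intro y hy
        rw [IH x.rank hx y]
        exact ZFSet.rank_lt_of_mem hy

theorem toSet_vz (β : Ordinal.{u}) : (vz β).toSet = Vlt β := by
  ext x; exact mem_vz_iff β x

theorem rank_vz (β : Ordinal.{u}) : (vz β).rank = β := by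
  induction β using Ordinal.induction with
  | h β IH =>
    apply le_antisymm
    · rw [ZFSet.rank_le_iff]
      intro y hy
      exact (mem_vz_iff β y).mp hy
    · by_contra h
      push_neg at h
      have h2 : vz β ∈ vz β := by
        rw [mem_vz_iff]; exact h
      exact (ZFSet.rank_lt_of_mem h2).false

/-- `x` of rank `ρ` exists. -/
theorem exists_rank_eq (ρ : Ordinal.{u}) : ∃ y : ZFSet.{u}, y.rank = ρ :=
  ⟨vz ρ, rank_vz ρ⟩

/-- realize a (small) subfamily of `Vlt β` as a ZF set. -/
def zOf (β : Ordinal.{u}) (S : Set ZFSet.{u}) : ZFSet.{u} :=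
  ZFSet.sep (fun x => x ∈ S) (ZFSet.powerset (vz β))

theorem mem_zOf_iff {β : Ordinal.{u}} {S : Set ZFSet.{u}} (hS : ∀ x ∈ S, x.toSet ⊆ Vlt β)
    {x : ZFSet.{u}} : x ∈ zOf β S ↔ x ∈ S := by
  rw [zOf, ZFSet.mem_sep, ZFSet.mem_powerset]
  constructor
  · exact fun h => h.2
  · intro h
    refine ⟨?_, h⟩
    intro t ht
    rw [mem_vz_iff]
    exact hS x h ht

theorem toSet_zOf {β : Ordinal.{u}} {S : Set ZFSet.{u}} (hS : ∀ x ∈ S, x.toSet ⊆ Vlt β) :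
    (zOf β S).toSet = S := by
  ext x; exact mem_zOf_iff hS

/-- realize a small subset of `Vlt β` as a ZF set (element version). -/
def zEl (β : Ordinal.{u}) (S : Set ZFSet.{u}) : ZFSet.{u} :=
  ZFSet.sep (fun x => x ∈ S) (vz β)

theorem mem_zEl_iff {β : Ordinal.{u}} {S : Set ZFSet.{u}} (hS : S ⊆ Vlt β) {x : ZFSet.{u}} :
    x ∈ zEl β S ↔ x ∈ S := by
  rw [zEl, ZFSet.mem_sep, mem_vz_iff]
  exact ⟨fun h => h.2, fun h => ⟨hS h, h⟩⟩

theorem toSet_zEl {β : Ordinal.{u}} {S : Set ZFSet.{u}} (hS : S ⊆ Vlt β) :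
    (zEl β S).toSet = S := by
  ext x; exact mem_zEl_iff hS

theorem zEl_roundtrip {β : Ordinal.{u}} {x : ZFSet.{u}} (h : x.toSet ⊆ Vlt β) :
    zEl β x.toSet = x := by
  apply ZFSet.toSet_injective
  exact toSet_zEl h

end STAux
end AuxST2

noncomputable section AuxST3
namespace STAux
open Cardinal Set

variable {κ : Cardinal.{u}}

/-- auxiliary: decode a finite ordinal to a natural number. -/
def ordNat (i : Ordinal.{u}) : ℕ :=
  if h : i < Ordinal.omega0 then Classical.choose (Ordinal.lt_omega0.mp h) else 0

theorem ordNat_spec {i : Ordinal.{u}} (h : i < Ordinal.omega0) : (ordNat i : Ordinal.{u}) = i := by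
  rw [ordNat, dif_pos h]
  exact (Classical.choose_spec (Ordinal.lt_omega0.mp h)).symm

theorem chain_mono {f : ℕ → ZFSet.{u}} (hf : ∀ n, f n ⊆ f (n + 1)) :
    ∀ {m n : ℕ}, m ≤ n → f m ⊆ f n := by
  intro m n h
  induction n with
  | zero => rw [Nat.le_zero.mp h]
  | succ n IH =>
    rcases Nat.lt_or_ge m (n + 1) with h' | h'
    · exact fun t ht => hf n (IH (Nat.lt_succ_iff.mp h') ht)
    · rw [le_antisymm h h']

/-- unions of increasing `ω`-chains stay in a `κ`-closed family, `κ > ℵ₀`. -/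
theorem omega_chain_mem (hκω : ℵ₀ < κ) {C : Set ZFSet.{u}} (hC : zClosed κ C)
    {f : ℕ → ZFSet.{u}} (hmono : ∀ n, f n ⊆ f (n + 1)) (hmem : ∀ n, f n ∈ C)
    {w : ZFSet.{u}} (hw : ∀ t, t ∈ w ↔ ∃ n : ℕ, t ∈ f n) : w ∈ C := by
  have homega : (Ordinal.omega0 : Ordinal.{u}).card = ℵ₀ := Ordinal.card_omega0
  refine hC Ordinal.omega0 (by simpa using Ordinal.omega0_ne_zero) (by rw [homega]; exact hκω)
    (fun i => f (ordNat i)) ?_ ?_ w ?_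
  · intro i j hij hj
    apply chain_mono hmono
    have hi : i < Ordinal.omega0 := lt_of_le_of_lt hij hj
    have := ordNat_spec hi
    have := ordNat_spec hj
    have hnat : (ordNat i : Ordinal.{u}) ≤ (ordNat j : Ordinal.{u}) := by
      rw [ordNat_spec hi, ordNat_spec hj]; exact hij
    exact_mod_cast hnat
  · intro i _; exact hmem _
  · intro t
    rw [hw]
    constructor
    · rintro ⟨n, hn⟩
      refine ⟨(n : Ordinal.{u}), Ordinal.nat_lt_omega0 n, ?_⟩
      have : ordNat (n : Ordinal.{u}) = n := by
        have := ordNat_spec (Ordinal.nat_lt_omega0 n)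
        exact_mod_cast this
      show t ∈ f (ordNat ((n : Ordinal.{u})))
      rwa [this]
    · rintro ⟨i, _, hi⟩; exact ⟨_, hi⟩

theorem zsmall_of_chain (hκ : κ.IsRegular) {γ : Ordinal.{u}} (hγ : γ.card < κ)
    {z : Ordinal.{u} → ZFSet.{u}} (hz : ∀ i < γ, zsmall κ (z i)) {w : ZFSet.{u}}
    (hw : ∀ t, t ∈ w ↔ ∃ i < γ, t ∈ z i) : zsmall κ w := by
  have htoSet : w.toSet = ⋃ i : Set.Iio γ, (z i.1).toSet := by
    ext t
    simp only [Set.mem_iUnion]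
    constructor
    · intro ht
      obtain ⟨i, hi, hti⟩ := (hw t).mp ht
      exact ⟨⟨i, hi⟩, hti⟩
    · rintro ⟨⟨i, hi⟩, hti⟩
      exact (hw t).mpr ⟨i, hi, hti⟩
  rw [zsmall_iff_sSmall, htoSet]
  apply sSmall_iUnion hκ
  · rw [Ordinal.mk_Iio_ordinal]
    exact Cardinal.lift_lt.mpr hγ
  · exact fun i => hz i.1 i.2

theorem inPk_of_chain (hκ : κ.IsRegular) {β γ : Ordinal.{u}} (hγ : γ.card < κ)
    {z : Ordinal.{u} → ZFSet.{u}} (hz : ∀ i < γ, inPk κ β (z i)) {w : ZFSet.{u}}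
    (hw : ∀ t, t ∈ w ↔ ∃ i < γ, t ∈ z i) : inPk κ β w := by
  refine ⟨zsmall_of_chain hκ hγ (fun i hi => (hz i hi).1) hw, ?_⟩
  intro t ht
  obtain ⟨i, hi, hti⟩ := (hw t).mp ht
  exact (hz i hi).2 hti

theorem club_full (hκ : κ.IsRegular) (β : Ordinal.{u}) :
    zClub κ β {x : ZFSet.{u} | inPk κ β x} := by
  refine ⟨fun y hy => hy, ?_, ?_⟩
  · intro γ hγ0 hγ z hmono hz w hw
    exact inPk_of_chain hκ hγ (fun i hi => hz i hi) hw
  · intro x hx; exact ⟨x, hx, fun t ht => ht⟩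

theorem club_cone (hκ : κ.IsRegular) {β : Ordinal.{u}} {x0 : ZFSet.{u}} (h0 : inPk κ β x0) :
    zClub κ β {z : ZFSet.{u} | inPk κ β z ∧ x0 ⊆ z} := by
  refine ⟨fun y hy => hy.1, ?_, ?_⟩
  · intro γ hγ0 hγ z hmono hz w hw
    refine ⟨inPk_of_chain hκ hγ (fun i hi => (hz i hi).1) hw, ?_⟩
    have h0γ : (0 : Ordinal.{u}) < γ := pos_iff_ne_zero.mpr hγ0
    intro t ht
    exact (hw t).mpr ⟨0, h0γ, (hz 0 h0γ).2 ht⟩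
  · intro x hx
    refine ⟨x ∪ x0, ⟨⟨?_, ?_⟩, fun t ht => ZFSet.mem_union.mpr (Or.inr ht)⟩,
      fun t ht => ZFSet.mem_union.mpr (Or.inl ht)⟩
    · rw [zsmall_iff_sSmall]
      have : (x ∪ x0).toSet = x.toSet ∪ x0.toSet := by
        ext t; exact ZFSet.mem_union
      rw [this]
      exact sSmall_union hκ hx.1 h0.1
    · intro t ht
      rcases ZFSet.mem_union.mp ht with h | h
      · exact hx.2 h
      · exact h0.2 h

theorem club_memEl (hκ : κ.IsRegular) {β : Ordinal.{u}} {a : ZFSet.{u}} (ha : a.rank < β) :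
    zClub κ β {x : ZFSet.{u} | inPk κ β x ∧ a ∈ x} := by
  have h0 : inPk κ β ({a} : ZFSet.{u}) := by
    constructor
    · rw [zsmall_iff_sSmall]
      have : ({a} : ZFSet.{u}).toSet = {a} := by
        ext t; exact ZFSet.mem_singleton
      rw [this]
      exact sSmall_singleton hκ a
    · intro t ht
      have : t = a := ZFSet.mem_singleton.mp ht
      rw [this]; exact ha
  have hiff : {x : ZFSet.{u} | inPk κ β x ∧ a ∈ x}
      = {z : ZFSet.{u} | inPk κ β z ∧ ({a} : ZFSet.{u}) ⊆ z} := by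
    ext x
    simp only [Set.mem_setOf_eq, and_congr_right_iff]
    intro _
    constructor
    · intro h t ht
      rwa [ZFSet.mem_singleton.mp ht]
    · intro h; exact h (ZFSet.mem_singleton.mpr rfl)
  rw [hiff]
  exact club_cone hκ h0

theorem club_liftRestr (hκ : κ.IsRegular) {δ β : Ordinal.{u}} (hδβ : δ ≤ β)
    {D : Set ZFSet.{u}} (hD : zClub κ δ D) :
    zClub κ β {x : ZFSet.{u} | inPk κ β x ∧ restr δ x ∈ D} := by
  refine ⟨fun y hy => hy.1, ?_, ?_⟩
  · intro γ hγ0 hγ z hmono hz w hw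
    refine ⟨inPk_of_chain hκ hγ (fun i hi => (hz i hi).1) hw, ?_⟩
    refine hD.2.1 γ hγ0 hγ (fun i => restr δ (z i)) ?_ (fun i hi => (hz i hi).2) _ ?_
    · intro i j hij hj t ht
      rw [mem_restr] at ht ⊢
      exact ⟨hmono i j hij hj ht.1, ht.2⟩
    · intro t
      rw [mem_restr, hw]
      constructor
      · rintro ⟨⟨i, hi, hti⟩, hrank⟩
        exact ⟨i, hi, mem_restr.mpr ⟨hti, hrank⟩⟩
      · rintro ⟨i, hi, hti⟩
        rw [mem_restr] at hti
        exact ⟨⟨i, hi, hti.1⟩, hti.2⟩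
  · intro x hx
    obtain ⟨z, hzD, hz⟩ := hD.2.2 (restr δ x) (inPk_restr hx)
    have hzVlt : z.toSet ⊆ Vlt δ := (hD.1 z hzD).2
    refine ⟨x ∪ z, ⟨⟨?_, ?_⟩, ?_⟩, fun t ht => ZFSet.mem_union.mpr (Or.inl ht)⟩
    · rw [zsmall_iff_sSmall]
      have : (x ∪ z).toSet = x.toSet ∪ z.toSet := by ext t; exact ZFSet.mem_union
      rw [this]
      exact sSmall_union hκ hx.1 (hD.1 z hzD).1
    · intro t ht
      rcases ZFSet.mem_union.mp ht with h | h
      · exact hx.2 h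
      · exact lt_of_lt_of_le (hzVlt h) hδβ
    · have : restr δ (x ∪ z) = z := by
        apply ZFSet.ext; intro t
        rw [mem_restr, ZFSet.mem_union]
        constructor
        · rintro ⟨h | h, hrank⟩
          · exact hz (mem_restr.mpr ⟨h, hrank⟩)
          · exact h
        · intro h; exact ⟨Or.inr h, hzVlt h⟩
      rwa [this]

theorem not_stationary_of_disjoint_club {β : Ordinal.{u}} {S : Set ZFSet.{u}}
    {C : Set ZFSet.{u}} (hC : zClub κ β C) (hdisj : ∀ y, y ∈ S → y ∈ C → False) :
    ¬ zStationary κ β S := by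
  rintro ⟨_, h⟩
  obtain ⟨y, hyS, hyC⟩ := h C hC
  exact hdisj y hyS hyC

theorem not_stationary_empty (hκ : κ.IsRegular) (β : Ordinal.{u}) {S : Set ZFSet.{u}}
    (hS : S = ∅) : ¬ zStationary κ β S :=
  not_stationary_of_disjoint_club (club_full hκ β) (fun y hy _ => by rw [hS] at hy; exact hy)

/-- nonstationary sets avoid clubs. -/
theorem exists_disjoint_club {β : Ordinal.{u}} {S : Set ZFSet.{u}}
    (hinPk : ∀ y ∈ S, inPk κ β y) (h : ¬ zStationary κ β S) :
    ∃ C : Set ZFSet.{u}, zClub κ β C ∧ ∀ y, y ∈ S → y ∈ C → False := by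
  rw [zStationary, not_and_or] at h
  rcases h with h | h
  · exact absurd hinPk h
  · push_neg at h
    obtain ⟨C, hC, hdisj⟩ := h
    exact ⟨C, hC, fun y hyS hyC => hdisj y hyS hyC⟩

/-- the union of a stationary subset of `𝒫_κ(V_δ)` is all of `V_δ`. -/
theorem toSet_sUnion_of_stationary (hκ : κ.IsRegular) {δ : Ordinal.{u}} {W : ZFSet.{u}}
    (hW : zStationary κ δ W.toSet) : (ZFSet.sUnion W).toSet = Vlt δ := by
  ext t
  constructor
  · intro ht
    obtain ⟨z, hzW, htz⟩ := ZFSet.mem_sUnion.mp ht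
    exact (hW.1 z hzW).2 htz
  · intro ht
    obtain ⟨y, hyW, hyC⟩ := hW.2 _ (club_memEl hκ (show ZFSet.rank t < δ from ht))
    exact ZFSet.mem_sUnion.mpr ⟨y, hyW, hyC.2⟩

theorem rank_eq_of_toSet_eq_Vlt {δ : Ordinal.{u}} {u : ZFSet.{u}} (h : u.toSet = Vlt δ) :
    u.rank = δ := by
  apply le_antisymm
  · rw [ZFSet.rank_le_iff]
    intro y hy
    have : y ∈ u.toSet := hy
    rwa [h] at this
  · by_contra hcon
    push_neg at hcon
    have : vz u.rank ∈ u.toSet := by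
      rw [h]
      show (vz u.rank).rank < δ
      rw [rank_vz]; exact hcon
    have h2 : (vz u.rank).rank < u.rank := ZFSet.rank_lt_of_mem this
    rw [rank_vz] at h2
    exact h2.false

theorem rank_sUnion_of_stationary (hκ : κ.IsRegular) {δ : Ordinal.{u}} {W : ZFSet.{u}}
    (hW : zStationary κ δ W.toSet) : (ZFSet.sUnion W).rank = δ :=
  rank_eq_of_toSet_eq_Vlt (toSet_sUnion_of_stationary hκ hW)

theorem inter_sUnion_eq_restr (hκ : κ.IsRegular) {δ : Ordinal.{u}} {W : ZFSet.{u}}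
    (hW : zStationary κ δ W.toSet) (x : ZFSet.{u}) :
    x ∩ ZFSet.sUnion W = restr δ x :=
  inter_eq_restr (toSet_sUnion_of_stationary hκ hW)

end STAux
end AuxST3

noncomputable section AuxST4
namespace STAux
open Cardinal Set

variable {κ : Cardinal.{u}}

theorem toSet_union (x y : ZFSet.{u}) : (x ∪ y).toSet = x.toSet ∪ y.toSet := by
  ext t; exact ZFSet.mem_union

theorem inPk_union (hκ : κ.IsRegular) {β : Ordinal.{u}} {x y : ZFSet.{u}}
    (hx : inPk κ β x) (hy : inPk κ β y) : inPk κ β (x ∪ y) := by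
  constructor
  · rw [zsmall_iff_sSmall, toSet_union]
    exact sSmall_union hκ hx.1 hy.1
  · rw [toSet_union]
    exact Set.union_subset hx.2 hy.2

/-- closing passes used for intersections of families of clubs. -/
noncomputable def Hp (G : Ordinal.{u} → ZFSet.{u} → ZFSet.{u}) (β : Ordinal.{u})
    (t : ZFSet.{u}) : Ordinal.{u} → ZFSet.{u}
  | ξ => G ξ (t ∪ zEl β (⋃ η : Set.Iio ξ, (Hp G β t η.1).toSet))
  termination_by ξ => ξ
  decreasing_by exact η.2

theorem Hp_eq (G : Ordinal.{u} → ZFSet.{u} → ZFSet.{u}) (β : Ordinal.{u})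
    (t : ZFSet.{u}) (ξ : Ordinal.{u}) :
    Hp G β t ξ = G ξ (t ∪ zEl β (⋃ η : Set.Iio ξ, (Hp G β t η.1).toSet)) := by
  rw [Hp]

section InterClub

variable (hκ : κ.IsRegular) (hκω : ℵ₀ < κ) {β : Ordinal.{u}} {ι : Type (u + 1)}
  (f : ι → Set ZFSet.{u})

/-- intersections of fewer than `κ` clubs are clubs. -/
theorem club_iInter (hκ : κ.IsRegular) (hκω : ℵ₀ < κ) {β : Ordinal.{u}} {ι : Type (u + 1)}
    (f : ι → Set ZFSet.{u}) (hι : Cardinal.mk ι < Cardinal.lift.{u + 1} κ)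
    (hf : ∀ i, zClub κ β (f i)) :
    zClub κ β {x : ZFSet.{u} | inPk κ β x ∧ ∀ i, x ∈ f i} := by
  classical
  constructor
  · exact fun y hy => hy.1
  constructor
  · -- closedness
    intro γ hγ0 hγ z hmono hz w hw
    refine ⟨inPk_of_chain hκ hγ (fun i hi => (hz i hi).1) hw, ?_⟩
    intro i
    exact (hf i).2.1 γ hγ0 hγ z hmono (fun j hj => (hz j hj).2 i) w hw
  -- unboundedness
  rcases isEmpty_or_nonempty ι with hempty | hne
  · intro x hx
    exact ⟨x, ⟨hx, fun i => (hempty.false i).elim⟩, fun t ht => ht⟩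
  obtain ⟨m, hmκ, hm⟩ := Cardinal.lt_lift_iff.mp hι
  set o : Ordinal.{u} := m.ord with ho
  have hocard : o.card = m := Cardinal.card_ord m
  have hmkIio : Cardinal.mk (Set.Iio o) = Cardinal.mk ι := by
    rw [Ordinal.mk_Iio_ordinal, hocard, hm]
  obtain ⟨e⟩ : Nonempty (Set.Iio o ≃ ι) := Cardinal.eq.mp hmkIio
  -- choice into the clubs
  have hGf : ∀ i : ι, ∃ g : ZFSet.{u} → ZFSet.{u},
      ∀ s, inPk κ β s → g s ∈ f i ∧ s ⊆ g s := by
    intro i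
    choose g hg1 hg2 using fun s (hs : inPk κ β s) => (hf i).2.2 s hs
    refine ⟨fun s => if hs : inPk κ β s then g s hs else s, ?_⟩
    intro s hs
    simp only [dif_pos hs]
    exact ⟨hg1 s hs, hg2 s hs⟩
  choose Gf hGf using hGf
  set G : Ordinal.{u} → ZFSet.{u} → ZFSet.{u} :=
    fun ξ s => if h : ξ < o then Gf (e ⟨ξ, h⟩) s else s with hG
  -- properties of the pass
  have hHp : ∀ t : ZFSet.{u}, inPk κ β t → ∀ ξ : Ordinal.{u}, ξ < o →
      inPk κ β (Hp G β t ξ) ∧ t ⊆ Hp G β t ξ ∧ (∀ η, η < ξ → Hp G β t η ⊆ Hp G β t ξ) ∧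
      ∀ h : ξ < o, Hp G β t ξ ∈ f (e ⟨ξ, h⟩) := by
    intro t ht ξ
    induction ξ using Ordinal.induction with
    | h ξ IH =>
      intro hξo
      have hUsub : (⋃ η : Set.Iio ξ, (Hp G β t η.1).toSet) ⊆ Vlt β := by
        rintro s hs
        simp only [Set.mem_iUnion] at hs
        obtain ⟨η, hη⟩ := hs
        exact ((IH η.1 η.2 (lt_trans η.2 hξo)).1).2 hη
      have hUsmall : sSmall κ (⋃ η : Set.Iio ξ, (Hp G β t η.1).toSet) := by
        apply sSmall_iUnion hκ
        · rw [Ordinal.mk_Iio_ordinal]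
          refine Cardinal.lift_lt.mpr (lt_of_le_of_lt ?_ hmκ)
          rw [← hocard]
          exact Ordinal.card_le_card hξo.le
        · exact fun η => ((IH η.1 η.2 (lt_trans η.2 hξo)).1).1
      have hzEl : (zEl β (⋃ η : Set.Iio ξ, (Hp G β t η.1).toSet)).toSet
          = ⋃ η : Set.Iio ξ, (Hp G β t η.1).toSet := toSet_zEl hUsub
      have harg : inPk κ β (t ∪ zEl β (⋃ η : Set.Iio ξ, (Hp G β t η.1).toSet)) := by
        apply inPk_union hκ ht
        constructor
        · rw [zsmall_iff_sSmall, hzEl]; exact hUsmall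
        · rw [hzEl]; exact hUsub
      have hval : Hp G β t ξ = Gf (e ⟨ξ, hξo⟩)
          (t ∪ zEl β (⋃ η : Set.Iio ξ, (Hp G β t η.1).toSet)) := by
        rw [Hp_eq, hG]
        simp only [dif_pos hξo]
      have hspec := hGf (e ⟨ξ, hξo⟩) _ harg
      have hsubarg : t ∪ zEl β (⋃ η : Set.Iio ξ, (Hp G β t η.1).toSet) ⊆ Hp G β t ξ := by
        rw [hval]; exact hspec.2
      refine ⟨?_, ?_, ?_, ?_⟩
      · rw [hval]
        have hmem := hspec.1
        exact (hf _).1 _ hmem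
      · intro s hs
        exact hsubarg (ZFSet.mem_union.mpr (Or.inl hs))
      · intro η hη s hs
        apply hsubarg
        apply ZFSet.mem_union.mpr
        right
        rw [← ZFSet.mem_toSet, hzEl]
        exact Set.mem_iUnion.mpr ⟨⟨η, hη⟩, hs⟩
      · intro h
        rw [hval]
        exact hspec.1
  -- iterate the passes ω many times
  intro x0 hx0
  set T : ℕ → ZFSet.{u} := fun n => Nat.rec x0
    (fun _ tn => tn ∪ zEl β (⋃ ξ : Set.Iio o, (Hp G β tn ξ.1).toSet)) n with hT
  have hTstep : ∀ n, T (n + 1) = T n ∪ zEl β (⋃ ξ : Set.Iio o, (Hp G β (T n) ξ.1).toSet) := by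
    intro n; rfl
  have hTgood : ∀ n, inPk κ β (T n) ∧ T n ⊆ T (n + 1) ∧
      (∀ ξ : Set.Iio o, Hp G β (T n) ξ.1 ⊆ T (n + 1)) := by
    intro n
    induction n with
    | zero =>
      have h0 : T 0 = x0 := rfl
      rw [hTstep 0, h0]
      have hUsub : (⋃ ξ : Set.Iio o, (Hp G β x0 ξ.1).toSet) ⊆ Vlt β := by
        rintro s hs
        simp only [Set.mem_iUnion] at hs
        obtain ⟨ξ, hξ⟩ := hs
        exact ((hHp x0 hx0 ξ.1 ξ.2).1).2 hξ
      have hUsmall : sSmall κ (⋃ ξ : Set.Iio o, (Hp G β x0 ξ.1).toSet) := by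
        apply sSmall_iUnion hκ
        · rw [Ordinal.mk_Iio_ordinal, hocard]
          exact Cardinal.lift_lt.mpr hmκ
        · exact fun ξ => ((hHp x0 hx0 ξ.1 ξ.2).1).1
      have hzEl := toSet_zEl hUsub
      refine ⟨hx0, fun t ht => ZFSet.mem_union.mpr (Or.inl ht), ?_⟩
      intro ξ s hs
      apply ZFSet.mem_union.mpr
      right
      rw [← ZFSet.mem_toSet, hzEl]
      exact Set.mem_iUnion.mpr ⟨ξ, hs⟩
    | succ n IHn =>
      obtain ⟨hn, hstep, hsub⟩ := IHn
      have hTn1 : inPk κ β (T (n + 1)) := by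
        rw [hTstep n]
        have hUsub : (⋃ ξ : Set.Iio o, (Hp G β (T n) ξ.1).toSet) ⊆ Vlt β := by
          rintro s hs
          simp only [Set.mem_iUnion] at hs
          obtain ⟨ξ, hξ⟩ := hs
          exact ((hHp (T n) hn ξ.1 ξ.2).1).2 hξ
        have hUsmall : sSmall κ (⋃ ξ : Set.Iio o, (Hp G β (T n) ξ.1).toSet) := by
          apply sSmall_iUnion hκ
          · rw [Ordinal.mk_Iio_ordinal, hocard]
            exact Cardinal.lift_lt.mpr hmκ
          · exact fun ξ => ((hHp (T n) hn ξ.1 ξ.2).1).1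
        apply inPk_union hκ hn
        constructor
        · rw [zsmall_iff_sSmall, toSet_zEl hUsub]; exact hUsmall
        · rw [toSet_zEl hUsub]; exact hUsub
      have hUsub : (⋃ ξ : Set.Iio o, (Hp G β (T (n+1)) ξ.1).toSet) ⊆ Vlt β := by
        rintro s hs
        simp only [Set.mem_iUnion] at hs
        obtain ⟨ξ, hξ⟩ := hs
        exact ((hHp (T (n+1)) hTn1 ξ.1 ξ.2).1).2 hξ
      refine ⟨hTn1, ?_, ?_⟩
      · rw [hTstep (n+1)]
        exact fun t ht => ZFSet.mem_union.mpr (Or.inl ht)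
      · intro ξ s hs
        rw [hTstep (n+1)]
        apply ZFSet.mem_union.mpr
        right
        rw [← ZFSet.mem_toSet, toSet_zEl hUsub]
        exact Set.mem_iUnion.mpr ⟨ξ, hs⟩
  -- the limit of the iteration
  have hwsub : (⋃ n : ULift.{u+1} ℕ, (T n.down).toSet) ⊆ Vlt β := by
    rintro s hs
    simp only [Set.mem_iUnion] at hs
    obtain ⟨n, hn⟩ := hs
    exact ((hTgood n.down).1).2 hn
  set w : ZFSet.{u} := zEl β (⋃ n : ULift.{u+1} ℕ, (T n.down).toSet) with hwdef
  have hwToSet : w.toSet = ⋃ n : ULift.{u+1} ℕ, (T n.down).toSet := toSet_zEl hwsub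
  have hwmem : ∀ t : ZFSet.{u}, t ∈ w ↔ ∃ n : ℕ, t ∈ T n := by
    intro t
    rw [← ZFSet.mem_toSet, hwToSet]
    simp only [Set.mem_iUnion]
    exact ⟨fun ⟨n, hn⟩ => ⟨n.down, hn⟩, fun ⟨n, hn⟩ => ⟨⟨n⟩, hn⟩⟩
  have hwinPk : inPk κ β w := by
    constructor
    · rw [zsmall_iff_sSmall, hwToSet]
      apply sSmall_iUnion hκ
      · rw [Cardinal.mk_uLift]
        have : Cardinal.mk ℕ = ℵ₀ := Cardinal.mk_nat
        rw [this, Cardinal.lift_aleph0]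
        have h2 : (ℵ₀ : Cardinal.{u+1}) = Cardinal.lift.{u+1} (ℵ₀ : Cardinal.{u}) :=
          Cardinal.lift_aleph0.symm
        rw [h2]
        exact Cardinal.lift_lt.mpr hκω
      · exact fun n => ((hTgood n.down).1).1
    · rw [hwToSet]; exact hwsub
  refine ⟨w, ⟨hwinPk, ?_⟩, ?_⟩
  · -- w belongs to every club in the family
    intro i
    set ξ : Set.Iio o := e.symm i with hξdef
    have hei : e ξ = i := e.apply_symm_apply i
    apply omega_chain_mem hκω (hf i).2.1
      (f := fun n => Hp G β (T n) ξ.1)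
      (hmono := ?_) (hmem := ?_) (hw := ?_)
    · intro n
      intro s hs
      have h1 : Hp G β (T n) ξ.1 ⊆ T (n + 1) := (hTgood n).2.2 ξ
      have h2 : T (n + 1) ⊆ Hp G β (T (n+1)) ξ.1 :=
        (hHp (T (n+1)) (hTgood (n+1)).1 ξ.1 ξ.2).2.1
      exact h2 (h1 hs)
    · intro n
      have := (hHp (T n) (hTgood n).1 ξ.1 ξ.2).2.2.2 ξ.2
      have heq : (⟨ξ.1, ξ.2⟩ : Set.Iio o) = ξ := rfl
      rw [heq, hei] at this
      exact this
    · intro t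
      rw [hwmem t]
      constructor
      · rintro ⟨n, hn⟩
        exact ⟨n, (hHp (T n) (hTgood n).1 ξ.1 ξ.2).2.1 hn⟩
      · rintro ⟨n, hn⟩
        exact ⟨n + 1, (hTgood n).2.2 ξ hn⟩
  · -- w contains x0
    intro t ht
    exact (hwmem t).mpr ⟨0, ht⟩

end InterClub
end STAux
end AuxST4

noncomputable section AuxST5
namespace STAux
open Cardinal Set

variable {κ : Cardinal.{u}}

/-- a finite ZF set below level `β`. -/
def Good (β : Ordinal.{u}) (e : ZFSet.{u}) : Prop :=
  e.toSet.Finite ∧ e.toSet ⊆ Vlt β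

theorem zf_subset_iff {x y : ZFSet.{u}} : x ⊆ y ↔ x.toSet ⊆ y.toSet := by
  constructor
  · intro h t ht; exact h ht
  · intro h t ht; exact h ht

theorem good_mono {β : Ordinal.{u}} {e e' : ZFSet.{u}} (h : e' ⊆ e) (he : Good β e) :
    Good β e' :=
  ⟨he.1.subset (zf_subset_iff.mp h), fun t ht => he.2 (zf_subset_iff.mp h ht)⟩

theorem sSmall_of_finite (hκ : κ.IsRegular) {s : Set ZFSet.{u}} (hs : s.Finite) :
    sSmall κ s :=
  lt_of_lt_of_le hs.lt_aleph0 (aleph0_le_lift' hκ)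

theorem inPk_of_good (hκ : κ.IsRegular) {β : Ordinal.{u}} {e : ZFSet.{u}} (he : Good β e) :
    inPk κ β e :=
  ⟨sSmall_of_finite hκ he.1, he.2⟩

/-- the cardinality of the family of finite ZF subsets of a small family is small. -/
theorem mk_finite_zf_subsets (hκ : κ.IsRegular) {t : Set ZFSet.{u}} (ht : sSmall κ t) :
    Cardinal.mk {e : ZFSet.{u} // e.toSet.Finite ∧ e.toSet ⊆ t} < Cardinal.lift.{u + 1} κ := by
  classical
  -- inject into finite subsets of `t`
  have hinj : ∃ φ : {e : ZFSet.{u} // e.toSet.Finite ∧ e.toSet ⊆ t} → {s : Set ZFSet.{u} // s ⊆ t ∧ s.Finite},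
      Function.Injective φ := by
    refine ⟨fun e => ⟨e.1.toSet, e.2.2, e.2.1⟩, ?_⟩
    intro e1 e2 h
    have : e1.1.toSet = e2.1.toSet := congrArg Subtype.val h
    exact Subtype.ext (ZFSet.toSet_injective this)
  obtain ⟨φ, hφ⟩ := hinj
  refine lt_of_le_of_lt (Cardinal.mk_le_of_injective hφ) ?_
  -- the finite subsets of `t` form a small family
  rcases Set.finite_or_infinite t with hfin | hinf
  · have hfin2 : Set.Finite {s : Set ZFSet.{u} | s ⊆ t ∧ s.Finite} :=
      hfin.finite_subsets.subset (fun s hs => hs.1)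
    haveI : Finite {s : Set ZFSet.{u} // s ⊆ t ∧ s.Finite} := hfin2.to_subtype
    exact lt_of_lt_of_le (Cardinal.lt_aleph0_of_finite _) (aleph0_le_lift' hκ)
  · have hinft : Infinite ↥t := Set.infinite_coe_iff.mpr hinf
    -- inject into `Finset ↥t`
    have hψ : Function.Injective (fun s : {s : Set ZFSet.{u} // s ⊆ t ∧ s.Finite} =>
        Set.Finite.toFinset (s := {x : ↥t | x.1 ∈ s.1})
          (Set.Finite.preimage (Set.injOn_of_injective Subtype.val_injective) s.2.2)) := by
      intro s1 s2 h
      have hcoe := congrArg (fun f : Finset ↥t => (f : Set ↥t)) h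
      simp only [Set.Finite.coe_toFinset] at hcoe
      apply Subtype.ext
      ext z
      constructor
      · intro hz
        have hzt : z ∈ t := s1.2.1 hz
        have h1 : (⟨z, hzt⟩ : ↥t) ∈ {x : ↥t | x.1 ∈ s1.1} := hz
        rw [hcoe] at h1
        exact h1
      · intro hz
        have hzt : z ∈ t := s2.2.1 hz
        have h1 : (⟨z, hzt⟩ : ↥t) ∈ {x : ↥t | x.1 ∈ s2.1} := hz
        rw [← hcoe] at h1
        exact h1
    refine lt_of_le_of_lt (Cardinal.mk_le_of_injective hψ) ?_
    rw [Cardinal.mk_finset_of_infinite]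
    exact ht

/-- fueled recursive closing function for the club `C`. -/
noncomputable def Ff (G : ZFSet.{u} → ZFSet.{u}) (β : Ordinal.{u}) : ℕ → ZFSet.{u} → ZFSet.{u}
  | 0 => fun e => G e
  | (n + 1) => fun e => G (Ff G β n e ∪ e ∪
      zEl β (⋃ e' : {e' : ZFSet.{u} // e' ⊆ e ∧ e' ≠ e}, (Ff G β n e'.1).toSet))

section FfSpec

variable (hκ : κ.IsRegular) {β : Ordinal.{u}} {C : Set ZFSet.{u}} (hC : zClub κ β C)
  {G : ZFSet.{u} → ZFSet.{u}} (hG : ∀ s, inPk κ β s → G s ∈ C ∧ s ⊆ G s)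

include hκ hC hG

theorem Ff_spec : ∀ n : ℕ, ∀ e : ZFSet.{u}, Good β e → Ff G β n e ∈ C ∧ e ⊆ Ff G β n e := by
  intro n
  induction n with
  | zero =>
    intro e he
    have := hG e (inPk_of_good hκ he)
    exact ⟨this.1, this.2⟩
  | succ n IH =>
    intro e he
    have hUsub : (⋃ e' : {e' : ZFSet.{u} // e' ⊆ e ∧ e' ≠ e}, (Ff G β n e'.1).toSet) ⊆ Vlt β := by
      rintro s hs
      simp only [Set.mem_iUnion] at hs
      obtain ⟨e', hs⟩ := hs
      exact (hC.1 _ (IH e'.1 (good_mono e'.2.1 he)).1).2 hs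
    have hUsmall : sSmall κ (⋃ e' : {e' : ZFSet.{u} // e' ⊆ e ∧ e' ≠ e}, (Ff G β n e'.1).toSet) := by
      apply sSmall_iUnion hκ
      · refine lt_of_le_of_lt ?_ (mk_finite_zf_subsets hκ (sSmall_of_finite hκ he.1))
        apply Cardinal.mk_le_of_injective
          (f := fun e' : {e' : ZFSet.{u} // e' ⊆ e ∧ e' ≠ e} =>
            (⟨e'.1, (good_mono e'.2.1 he).1, fun t ht => zf_subset_iff.mp e'.2.1 ht⟩ :
              {e' : ZFSet.{u} // e'.toSet.Finite ∧ e'.toSet ⊆ e.toSet}))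
        intro a b h
        have h2 := congrArg Subtype.val h
        exact Subtype.ext h2
      · exact fun e' => (hC.1 _ (IH e'.1 (good_mono e'.2.1 he)).1).1
    have harg : inPk κ β (Ff G β n e ∪ e ∪
        zEl β (⋃ e' : {e' : ZFSet.{u} // e' ⊆ e ∧ e' ≠ e}, (Ff G β n e'.1).toSet)) := by
      apply inPk_union hκ
      · exact inPk_union hκ (hC.1 _ (IH e he).1) (inPk_of_good hκ he)
      · constructor
        · rw [zsmall_iff_sSmall, toSet_zEl hUsub]; exact hUsmall
        · rw [toSet_zEl hUsub]; exact hUsub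
    have := hG _ harg
    refine ⟨this.1, ?_⟩
    intro t ht
    exact this.2 (ZFSet.mem_union.mpr (Or.inl (ZFSet.mem_union.mpr (Or.inr ht))))

theorem Ff_fuel_step : ∀ n : ℕ, ∀ e : ZFSet.{u}, Good β e → Ff G β n e ⊆ Ff G β (n + 1) e := by
  intro n e he
  have hUsub : (⋃ e' : {e' : ZFSet.{u} // e' ⊆ e ∧ e' ≠ e}, (Ff G β n e'.1).toSet) ⊆ Vlt β := by
    rintro s hs
    simp only [Set.mem_iUnion] at hs
    obtain ⟨e', hs⟩ := hs
    exact (hC.1 _ (Ff_spec hκ hC hG n e'.1 (good_mono e'.2.1 he)).1).2 hs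
  have hUsmall : sSmall κ (⋃ e' : {e' : ZFSet.{u} // e' ⊆ e ∧ e' ≠ e}, (Ff G β n e'.1).toSet) := by
    apply sSmall_iUnion hκ
    · refine lt_of_le_of_lt ?_ (mk_finite_zf_subsets hκ (sSmall_of_finite hκ he.1))
      apply Cardinal.mk_le_of_injective
        (f := fun e' : {e' : ZFSet.{u} // e' ⊆ e ∧ e' ≠ e} =>
          (⟨e'.1, (good_mono e'.2.1 he).1, fun t ht => zf_subset_iff.mp e'.2.1 ht⟩ :
            {e' : ZFSet.{u} // e'.toSet.Finite ∧ e'.toSet ⊆ e.toSet}))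
      intro a b h
      have h2 := congrArg Subtype.val h
      exact Subtype.ext h2
    · exact fun e' => (hC.1 _ (Ff_spec hκ hC hG n e'.1 (good_mono e'.2.1 he)).1).1
  have harg : inPk κ β (Ff G β n e ∪ e ∪
      zEl β (⋃ e' : {e' : ZFSet.{u} // e' ⊆ e ∧ e' ≠ e}, (Ff G β n e'.1).toSet)) := by
    apply inPk_union hκ
    · exact inPk_union hκ (hC.1 _ (Ff_spec hκ hC hG n e he).1) (inPk_of_good hκ he)
    · constructor
      · rw [zsmall_iff_sSmall, toSet_zEl hUsub]; exact hUsmall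
      · rw [toSet_zEl hUsub]; exact hUsub
  intro t ht
  exact (hG _ harg).2 (ZFSet.mem_union.mpr (Or.inl (ZFSet.mem_union.mpr (Or.inl ht))))

theorem Ff_fuel_mono {m n : ℕ} (h : m ≤ n) {e : ZFSet.{u}} (he : Good β e) :
    Ff G β m e ⊆ Ff G β n e := by
  induction n with
  | zero => rw [Nat.le_zero.mp h]
  | succ n IH =>
    rcases Nat.lt_or_ge m (n + 1) with h' | h'
    · exact fun t ht => Ff_fuel_step hκ hC hG n e he (IH (Nat.lt_succ_iff.mp h') ht)
    · rw [le_antisymm h h']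

/-- `Ff` with one more unit of fuel absorbs values at proper subsets. -/
theorem Ff_absorb {n : ℕ} {e e' : ZFSet.{u}} (he : Good β e) (h1 : e' ⊆ e) (h2 : e' ≠ e) :
    Ff G β n e' ⊆ Ff G β (n + 1) e := by
  have hUsub : (⋃ e'' : {e'' : ZFSet.{u} // e'' ⊆ e ∧ e'' ≠ e}, (Ff G β n e''.1).toSet) ⊆ Vlt β := by
    rintro s hs
    simp only [Set.mem_iUnion] at hs
    obtain ⟨e'', hs⟩ := hs
    exact (hC.1 _ (Ff_spec hκ hC hG n e''.1 (good_mono e''.2.1 he)).1).2 hs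
  intro t ht
  show t ∈ G _
  have harg : inPk κ β (Ff G β n e ∪ e ∪
      zEl β (⋃ e'' : {e'' : ZFSet.{u} // e'' ⊆ e ∧ e'' ≠ e}, (Ff G β n e''.1).toSet)) := by
    have hUsmall : sSmall κ (⋃ e'' : {e'' : ZFSet.{u} // e'' ⊆ e ∧ e'' ≠ e}, (Ff G β n e''.1).toSet) := by
      apply sSmall_iUnion hκ
      · refine lt_of_le_of_lt ?_ (mk_finite_zf_subsets hκ (sSmall_of_finite hκ he.1))
        apply Cardinal.mk_le_of_injective
          (f := fun e'' : {e'' : ZFSet.{u} // e'' ⊆ e ∧ e'' ≠ e} =>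
            (⟨e''.1, (good_mono e''.2.1 he).1, fun t ht => zf_subset_iff.mp e''.2.1 ht⟩ :
              {e'' : ZFSet.{u} // e''.toSet.Finite ∧ e''.toSet ⊆ e.toSet}))
        intro a b h
        have h2 := congrArg Subtype.val h
        exact Subtype.ext h2
      · exact fun e'' => (hC.1 _ (Ff_spec hκ hC hG n e''.1 (good_mono e''.2.1 he)).1).1
    apply inPk_union hκ
    · exact inPk_union hκ (hC.1 _ (Ff_spec hκ hC hG n e he).1) (inPk_of_good hκ he)
    · constructor
      · rw [zsmall_iff_sSmall, toSet_zEl hUsub]; exact hUsmall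
      · rw [toSet_zEl hUsub]; exact hUsub
  apply (hG _ harg).2
  apply ZFSet.mem_union.mpr
  right
  rw [← ZFSet.mem_toSet, toSet_zEl hUsub]
  exact Set.mem_iUnion.mpr ⟨⟨e', h1, h2⟩, ht⟩

end FfSpec

/-- the canonical closing function on finite sets. -/
noncomputable def Ffin (G : ZFSet.{u} → ZFSet.{u}) (β : Ordinal.{u}) (e : ZFSet.{u}) : ZFSet.{u} :=
  Ff G β e.toSet.ncard e

section FfinSpec

variable (hκ : κ.IsRegular) {β : Ordinal.{u}} {C : Set ZFSet.{u}} (hC : zClub κ β C)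
  {G : ZFSet.{u} → ZFSet.{u}} (hG : ∀ s, inPk κ β s → G s ∈ C ∧ s ⊆ G s)

include hκ hC hG

theorem Ffin_mem {e : ZFSet.{u}} (he : Good β e) : Ffin G β e ∈ C :=
  (Ff_spec hκ hC hG _ e he).1

theorem Ffin_supset {e : ZFSet.{u}} (he : Good β e) : e ⊆ Ffin G β e :=
  (Ff_spec hκ hC hG _ e he).2

theorem Ffin_mono {e e' : ZFSet.{u}} (he : Good β e) (h : e' ⊆ e) :
    Ffin G β e' ⊆ Ffin G β e := by
  rcases eq_or_ne e' e with rfl | hne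
  · exact fun t ht => ht
  have he' : Good β e' := good_mono h he
  have hss : e'.toSet ⊂ e.toSet := by
    refine ⟨zf_subset_iff.mp h, ?_⟩
    intro hcon
    exact hne (ZFSet.toSet_injective (le_antisymm (zf_subset_iff.mp h) hcon))
  have hlt : e'.toSet.ncard < e.toSet.ncard := Set.ncard_lt_ncard hss he.1
  obtain ⟨k, hk⟩ : ∃ k, e.toSet.ncard = k + 1 := by
    have hne0 : e.toSet.ncard ≠ 0 := by omega
    exact Nat.exists_eq_succ_of_ne_zero hne0
  have h1 : Ffin G β e' ⊆ Ff G β k e' := by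
    apply Ff_fuel_mono hκ hC hG _ he'
    omega
  have h2 : Ff G β k e' ⊆ Ff G β (k + 1) e := Ff_absorb hκ hC hG he h hne
  have h3 : Ffin G β e = Ff G β (k + 1) e := by unfold Ffin; rw [hk]
  rw [h3]
  exact fun t ht => h2 (h1 ht)

end FfinSpec
end STAux
end AuxST5

noncomputable section AuxST6
namespace STAux
open Cardinal Set

variable {κ : Cardinal.{u}}

theorem finite_subset_directed_iUnion {ι : Type (u + 1)} [Nonempty ι]
    (g : ι → Set ZFSet.{u}) (hdir : ∀ i j, ∃ k, g i ⊆ g k ∧ g j ⊆ g k)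
    {t : Set ZFSet.{u}} (ht : t.Finite) (hsub : t ⊆ ⋃ i, g i) : ∃ i, t ⊆ g i := by
  classical
  revert hsub
  refine Set.Finite.induction_on (motive := fun t _ => t ⊆ (⋃ i, g i) → ∃ i, t ⊆ g i) t ht ?_ ?_
  · intro _
    exact ⟨Classical.arbitrary ι, by simp⟩
  · intro a s ha hs IH hsub
    have has : a ∈ ⋃ i, g i := hsub (Set.mem_insert a s)
    obtain ⟨i, hi⟩ := Set.mem_iUnion.mp has
    obtain ⟨j, hj⟩ := IH (fun x hx => hsub (Set.mem_insert_of_mem a hx))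
    obtain ⟨k, hik, hjk⟩ := hdir i j
    refine ⟨k, ?_⟩
    intro x hx
    rcases Set.mem_insert_iff.mp hx with rfl | hx
    · exact hik hi
    · exact hjk (hj hx)

/-- iterated closure of a set of ZF sets under the closing function. -/
noncomputable def clS (G : ZFSet.{u} → ZFSet.{u}) (β : Ordinal.{u}) (s : Set ZFSet.{u}) :
    ℕ → Set ZFSet.{u}
  | 0 => s
  | (n + 1) => clS G β s n ∪
      ⋃ e : {e : ZFSet.{u} // e.toSet.Finite ∧ e.toSet ⊆ clS G β s n}, (Ffin G β e.1).toSet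

noncomputable def clF (G : ZFSet.{u} → ZFSet.{u}) (β : Ordinal.{u}) (s : Set ZFSet.{u}) :
    Set ZFSet.{u} :=
  ⋃ n : ULift.{u + 1} ℕ, clS G β s n.down

theorem clS_fuel_step (G : ZFSet.{u} → ZFSet.{u}) (β : Ordinal.{u}) (s : Set ZFSet.{u}) (n : ℕ) :
    clS G β s n ⊆ clS G β s (n + 1) :=
  Set.subset_union_left

theorem clS_fuel_mono (G : ZFSet.{u} → ZFSet.{u}) (β : Ordinal.{u}) (s : Set ZFSet.{u})
    {m n : ℕ} (h : m ≤ n) : clS G β s m ⊆ clS G β s n := by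
  induction n with
  | zero => rw [Nat.le_zero.mp h]
  | succ n IH =>
    rcases Nat.lt_or_ge m (n + 1) with h' | h'
    · exact fun t ht => clS_fuel_step G β s n (IH (Nat.lt_succ_iff.mp h') ht)
    · rw [le_antisymm h h']

theorem clF_supset (G : ZFSet.{u} → ZFSet.{u}) (β : Ordinal.{u}) (s : Set ZFSet.{u}) :
    s ⊆ clF G β s := by
  intro t ht
  exact Set.mem_iUnion.mpr ⟨⟨0⟩, ht⟩

theorem clS_mono_set (G : ZFSet.{u} → ZFSet.{u}) (β : Ordinal.{u}) {s s' : Set ZFSet.{u}}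
    (h : s ⊆ s') (n : ℕ) : clS G β s n ⊆ clS G β s' n := by
  induction n with
  | zero => exact h
  | succ n IH =>
    intro t ht
    rcases ht with ht | ht
    · exact Set.mem_union_left _ (IH ht)
    · obtain ⟨e, hte⟩ := Set.mem_iUnion.mp ht
      exact Set.mem_union_right _
        (Set.mem_iUnion.mpr ⟨⟨e.1, e.2.1, fun x hx => IH (e.2.2 hx)⟩, hte⟩)

section ClSpec

variable (hκ : κ.IsRegular) (hκω : ℵ₀ < κ) {β : Ordinal.{u}} {C : Set ZFSet.{u}}
  (hC : zClub κ β C) {G : ZFSet.{u} → ZFSet.{u}}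
  (hG : ∀ s, inPk κ β s → G s ∈ C ∧ s ⊆ G s)

include hκ hC hG

theorem clS_spec {s : Set ZFSet.{u}} (hsmall : sSmall κ s) (hsub : s ⊆ Vlt β) :
    ∀ n : ℕ, clS G β s n ⊆ Vlt β ∧ sSmall κ (clS G β s n) := by
  intro n
  induction n with
  | zero => exact ⟨hsub, hsmall⟩
  | succ n IH =>
    have hgood : ∀ e : {e : ZFSet.{u} // e.toSet.Finite ∧ e.toSet ⊆ clS G β s n},
        Good β e.1 := fun e => ⟨e.2.1, fun t ht => IH.1 (e.2.2 ht)⟩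
    constructor
    · intro t ht
      rcases ht with ht | ht
      · exact IH.1 ht
      · obtain ⟨e, hte⟩ := Set.mem_iUnion.mp ht
        exact (hC.1 _ (Ffin_mem hκ hC hG (hgood e))).2 hte
    · apply sSmall_union hκ IH.2
      apply sSmall_iUnion hκ
      · exact mk_finite_zf_subsets hκ IH.2
      · exact fun e => (hC.1 _ (Ffin_mem hκ hC hG (hgood e))).1

theorem clF_subV {s : Set ZFSet.{u}} (hsmall : sSmall κ s) (hsub : s ⊆ Vlt β) :
    clF G β s ⊆ Vlt β := by
  intro t ht
  obtain ⟨n, hn⟩ := Set.mem_iUnion.mp ht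
  exact (clS_spec hκ hC hG hsmall hsub n.down).1 hn

include hκω in
theorem clF_small {s : Set ZFSet.{u}} (hsmall : sSmall κ s) (hsub : s ⊆ Vlt β) :
    sSmall κ (clF G β s) := by
  apply sSmall_iUnion hκ
  · rw [Cardinal.mk_uLift, Cardinal.mk_nat, Cardinal.lift_aleph0]
    have h2 : (ℵ₀ : Cardinal.{u+1}) = Cardinal.lift.{u+1} (ℵ₀ : Cardinal.{u}) :=
      Cardinal.lift_aleph0.symm
    rw [h2]
    exact Cardinal.lift_lt.mpr hκω
  · exact fun n => (clS_spec hκ hC hG hsmall hsub n.down).2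

theorem clF_closed {s : Set ZFSet.{u}} {e : ZFSet.{u}} (hef : e.toSet.Finite)
    (hesub : e.toSet ⊆ clF G β s) : (Ffin G β e).toSet ⊆ clF G β s := by
  obtain ⟨N, hN⟩ := finite_subset_directed_iUnion (fun n : ULift.{u+1} ℕ => clS G β s n.down)
    (fun i j => ⟨⟨max i.down j.down⟩, clS_fuel_mono G β s (le_max_left _ _),
      clS_fuel_mono G β s (le_max_right _ _)⟩) hef hesub
  intro t ht
  apply Set.mem_iUnion.mpr
  refine ⟨⟨N.down + 1⟩, ?_⟩
  exact Set.mem_union_right _ (Set.mem_iUnion.mpr ⟨⟨e, hef, hN⟩, ht⟩)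

end ClSpec

theorem clS_iUnion_sub (G : ZFSet.{u} → ZFSet.{u}) (β : Ordinal.{u}) {ι : Type (u + 1)}
    [Nonempty ι] (f : ι → Set ZFSet.{u}) (hdir : ∀ i j, ∃ k, f i ⊆ f k ∧ f j ⊆ f k) :
    ∀ n : ℕ, clS G β (⋃ i, f i) n ⊆ ⋃ i, clS G β (f i) n := by
  intro n
  induction n with
  | zero => exact fun t ht => ht
  | succ n IH =>
    intro t ht
    rcases ht with ht | ht
    · obtain ⟨i, hi⟩ := Set.mem_iUnion.mp (IH ht)
      exact Set.mem_iUnion.mpr ⟨i, clS_fuel_step G β (f i) n hi⟩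
    · obtain ⟨e, hte⟩ := Set.mem_iUnion.mp ht
      have hesub : e.1.toSet ⊆ ⋃ i, clS G β (f i) n := fun x hx => IH (e.2.2 hx)
      obtain ⟨i, hi⟩ := finite_subset_directed_iUnion (fun i => clS G β (f i) n)
        (fun i j => by
          obtain ⟨k, hik, hjk⟩ := hdir i j
          exact ⟨k, clS_mono_set G β hik n, clS_mono_set G β hjk n⟩) e.2.1 hesub
      exact Set.mem_iUnion.mpr ⟨i, Set.mem_union_right _
        (Set.mem_iUnion.mpr ⟨⟨e.1, e.2.1, hi⟩, hte⟩)⟩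

theorem clF_iUnion_sub (G : ZFSet.{u} → ZFSet.{u}) (β : Ordinal.{u}) {ι : Type (u + 1)}
    [Nonempty ι] (f : ι → Set ZFSet.{u}) (hdir : ∀ i j, ∃ k, f i ⊆ f k ∧ f j ⊆ f k) :
    clF G β (⋃ i, f i) ⊆ ⋃ i, clF G β (f i) := by
  intro t ht
  obtain ⟨n, hn⟩ := Set.mem_iUnion.mp ht
  obtain ⟨i, hi⟩ := Set.mem_iUnion.mp (clS_iUnion_sub G β f hdir n.down hn)
  exact Set.mem_iUnion.mpr ⟨i, Set.mem_iUnion.mpr ⟨n, hi⟩⟩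

end STAux
end AuxST6

noncomputable section AuxST7
namespace STAux
open Cardinal Set

variable {κ : Cardinal.{u}}

theorem toSet_zsingleton (a : ZFSet.{u}) : ({a} : ZFSet.{u}).toSet = {a} := by
  ext t
  constructor
  · intro ht; exact ZFSet.mem_singleton.mp ht
  · intro ht; exact ZFSet.mem_singleton.mpr ht

theorem zf_empty_union (d : ZFSet.{u}) : (∅ : ZFSet.{u}) ∪ d = d := by
  apply ZFSet.ext; intro t
  rw [ZFSet.mem_union]
  constructor
  · rintro (h | h)
    · exact absurd h (ZFSet.notMem_empty t)
    · exact h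
  · exact Or.inr

theorem zf_union_empty (e : ZFSet.{u}) : e ∪ (∅ : ZFSet.{u}) = e := by
  apply ZFSet.ext; intro t
  rw [ZFSet.mem_union]
  constructor
  · rintro (h | h)
    · exact h
    · exact absurd h (ZFSet.notMem_empty t)
  · exact Or.inl

theorem zf_union_rot (e d a : ZFSet.{u}) : e ∪ (d ∪ a) = (e ∪ a) ∪ d := by
  apply ZFSet.ext; intro t
  simp only [ZFSet.mem_union]
  tauto

/-- every small set closed under the canonical closing function belongs to `C`. -/
theorem closed_mem (hκ : κ.IsRegular) {β : Ordinal.{u}} {C : Set ZFSet.{u}}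
    (hC : zClub κ β C) {G : ZFSet.{u} → ZFSet.{u}}
    (hG : ∀ s, inPk κ β s → G s ∈ C ∧ s ⊆ G s) {x : ZFSet.{u}} (hx : inPk κ β x)
    (hcl : ∀ e : ZFSet.{u}, e.toSet.Finite → e ⊆ x → Ffin G β e ⊆ x) : x ∈ C := by
  classical
  obtain ⟨m, hmκ, hm⟩ := Cardinal.lt_lift_iff.mp hx.1
  set o : Ordinal.{u} := m.ord with ho
  have hocard : o.card = m := Cardinal.card_ord m
  have hmk : Cardinal.mk (Set.Iio o) = Cardinal.mk ↥x.toSet := by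
    rw [Ordinal.mk_Iio_ordinal, hocard, hm]
  obtain ⟨en⟩ : Nonempty (Set.Iio o ≃ ↥x.toSet) := Cardinal.eq.mp hmk
  set u : Ordinal.{u} → Set ZFSet.{u} :=
    fun ξ => {t | ∃ p : Set.Iio o, p.1 < ξ ∧ ((en p) : ZFSet.{u}) = t} with hu
  have u_mono : ∀ {ξ ξ' : Ordinal.{u}}, ξ ≤ ξ' → u ξ ⊆ u ξ' := by
    rintro ξ ξ' h t ⟨p, hp, hpt⟩
    exact ⟨p, lt_of_lt_of_le hp h, hpt⟩
  have u_subx : ∀ ξ, u ξ ⊆ x.toSet := by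
    rintro ξ t ⟨p, _, hpt⟩
    rw [← hpt]
    exact (en p).2
  have u_top : x.toSet ⊆ u o := by
    intro t ht
    refine ⟨en.symm ⟨t, ht⟩, (en.symm ⟨t, ht⟩).2, ?_⟩
    rw [Equiv.apply_symm_apply]
  -- the approximations
  set wd : ZFSet.{u} → Ordinal.{u} → Set ZFSet.{u} :=
    fun d ξ => ⋃ e : {e : ZFSet.{u} // e.toSet.Finite ∧ e.toSet ⊆ u ξ},
      (Ffin G β (e.1 ∪ d)).toSet with hwd
  have hdgood : ∀ d : ZFSet.{u}, d.toSet.Finite → d ⊆ x →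
      ∀ e : ZFSet.{u}, e.toSet.Finite → e.toSet ⊆ x.toSet → Good β (e ∪ d) := by
    intro d hdf hdx e hef hex
    constructor
    · rw [toSet_union]; exact hef.union hdf
    · rw [toSet_union]
      rintro t (ht | ht)
      · exact hx.2 (hex ht)
      · exact hx.2 (zf_subset_iff.mp hdx ht)
  have wd_subV : ∀ d : ZFSet.{u}, d.toSet.Finite → d ⊆ x → ∀ ξ, wd d ξ ⊆ Vlt β := by
    intro d hdf hdx ξ t ht
    obtain ⟨e, hte⟩ := Set.mem_iUnion.mp ht
    have hgood : Good β (e.1 ∪ d) :=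
      hdgood d hdf hdx e.1 e.2.1 (fun z hz => u_subx ξ (e.2.2 hz))
    exact (hC.1 _ (Ffin_mem hκ hC hG hgood)).2 hte
  have wd_mono : ∀ d : ZFSet.{u}, ∀ {ξ ξ' : Ordinal.{u}}, ξ ≤ ξ' → wd d ξ ⊆ wd d ξ' := by
    intro d ξ ξ' h t ht
    obtain ⟨e, hte⟩ := Set.mem_iUnion.mp ht
    exact Set.mem_iUnion.mpr ⟨⟨e.1, e.2.1, fun z hz => u_mono h (e.2.2 hz)⟩, hte⟩
  -- the main claim, by induction
  have main : ∀ ξ : Ordinal.{u}, ξ ≤ o → ∀ d : ZFSet.{u}, d.toSet.Finite → d ⊆ x →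
      zEl β (wd d ξ) ∈ C := by
    intro ξ
    induction ξ using Ordinal.limitRecOn with
    | zero =>
      intro _ d hdf hdx
      have hgoodd : Good β d := by
        have := hdgood d hdf hdx ∅ (by rw [ZFSet.toSet_empty]; exact Set.finite_empty)
          (by rw [ZFSet.toSet_empty]; exact Set.empty_subset _)
        rwa [zf_empty_union] at this
      have hu0 : u 0 = ∅ := by
        ext t
        constructor
        · rintro ⟨p, hp, _⟩; exact absurd hp (not_lt_of_ge (zero_le : (0 : Ordinal.{u}) ≤ p.1))
        · intro ht; exact absurd ht (Set.notMem_empty t)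
      have hwd0 : wd d 0 = (Ffin G β d).toSet := by
        ext t
        constructor
        · intro ht
          obtain ⟨e, hte⟩ := Set.mem_iUnion.mp ht
          have he : e.1 = (∅ : ZFSet.{u}) := by
            apply ZFSet.toSet_injective
            rw [ZFSet.toSet_empty]
            apply Set.eq_empty_of_subset_empty
            rw [← hu0]
            exact e.2.2
          rw [he, zf_empty_union] at hte
          exact hte
        · intro ht
          refine Set.mem_iUnion.mpr ⟨⟨∅, ?_, ?_⟩, ?_⟩
          · rw [ZFSet.toSet_empty]; exact Set.finite_empty
          · rw [ZFSet.toSet_empty]; exact Set.empty_subset _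
          · rwa [zf_empty_union]
      rw [hwd0, zEl_roundtrip (hC.1 _ (Ffin_mem hκ hC hG hgoodd)).2]
      exact Ffin_mem hκ hC hG hgoodd
    | add_one ξ IH =>
      intro hξ1 d hdf hdx
      have hξo : ξ < o := lt_of_lt_of_le (Order.lt_succ ξ) hξ1
      set aξ : ZFSet.{u} := ((en ⟨ξ, hξo⟩) : ZFSet.{u}) with haξ
      have haξx : aξ ∈ x.toSet := (en ⟨ξ, hξo⟩).2
      have hu_succ : u (Order.succ ξ) = u ξ ∪ {aξ} := by
        ext t
        constructor
        · rintro ⟨p, hp, hpt⟩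
          rcases lt_or_eq_of_le (Order.lt_succ_iff.mp hp) with h | h
          · exact Or.inl ⟨p, h, hpt⟩
          · right
            have hpeq : p = ⟨ξ, hξo⟩ := Subtype.ext h
            rw [← hpt, hpeq]
            rfl
        · rintro (⟨p, hp, hpt⟩ | ht)
          · exact ⟨p, lt_of_lt_of_le hp (Order.le_succ ξ), hpt⟩
          · have : t = aξ := ht
            exact ⟨⟨ξ, hξo⟩, Order.lt_succ ξ, this.symm⟩
      have key : wd d (Order.succ ξ) = wd (d ∪ {aξ}) ξ := by
        ext t
        constructor
        · intro ht
          obtain ⟨e, hte⟩ := Set.mem_iUnion.mp ht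
          set e' : ZFSet.{u} := e.1 \ ({aξ} : ZFSet.{u}) with he'
          have he'f : e'.toSet.Finite := by
            apply e.2.1.subset
            intro z hz
            exact (ZFSet.mem_sdiff.mp hz).1
          have he'sub : e'.toSet ⊆ u ξ := by
            intro z hz
            rw [ZFSet.mem_toSet, he', ZFSet.mem_sdiff] at hz
            have hz1 : z ∈ u (Order.succ ξ) := e.2.2 hz.1
            rw [hu_succ] at hz1
            rcases hz1 with h | h
            · exact h
            · exact absurd (ZFSet.mem_singleton.mpr h) hz.2
          have hsub : e.1 ∪ d ⊆ e' ∪ (d ∪ ({aξ} : ZFSet.{u})) := by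
            intro z hz
            rcases ZFSet.mem_union.mp hz with hz | hz
            · by_cases hza : z = aξ
              · apply ZFSet.mem_union.mpr; right
                apply ZFSet.mem_union.mpr; right
                exact ZFSet.mem_singleton.mpr hza
              · apply ZFSet.mem_union.mpr; left
                rw [he', ZFSet.mem_sdiff]
                exact ⟨hz, fun hc => hza (ZFSet.mem_singleton.mp hc)⟩
            · apply ZFSet.mem_union.mpr; right
              exact ZFSet.mem_union.mpr (Or.inl hz)
          have hgoodbig : Good β (e' ∪ (d ∪ ({aξ} : ZFSet.{u}))) := by
            have hd'f : (d ∪ ({aξ} : ZFSet.{u})).toSet.Finite := by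
              rw [toSet_union, toSet_zsingleton]
              exact hdf.union (Set.finite_singleton aξ)
            have hd'x : d ∪ ({aξ} : ZFSet.{u}) ⊆ x := by
              intro z hz
              rcases ZFSet.mem_union.mp hz with hz | hz
              · exact hdx hz
              · rw [ZFSet.mem_singleton.mp hz]; exact haξx
            exact hdgood _ hd'f hd'x e' he'f (fun z hz => u_subx ξ (he'sub hz))
          have := Ffin_mono hκ hC hG hgoodbig hsub hte
          exact Set.mem_iUnion.mpr ⟨⟨e', he'f, he'sub⟩, this⟩
        · intro ht
          obtain ⟨e, hte⟩ := Set.mem_iUnion.mp ht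
          rw [zf_union_rot] at hte
          refine Set.mem_iUnion.mpr ⟨⟨e.1 ∪ ({aξ} : ZFSet.{u}), ?_, ?_⟩, hte⟩
          · rw [toSet_union, toSet_zsingleton]
            exact e.2.1.union (Set.finite_singleton aξ)
          · rw [toSet_union, toSet_zsingleton]
            rintro z (hz | hz)
            · exact u_mono (Order.le_succ ξ) (e.2.2 hz)
            · rw [hu_succ]
              exact Or.inr hz
      rw [Ordinal.add_one_eq_succ, key]
      apply IH (le_of_lt (lt_of_lt_of_le (Order.lt_succ ξ) hξ1))
      · rw [toSet_union, toSet_zsingleton]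
        exact hdf.union (Set.finite_singleton aξ)
      · intro z hz
        rcases ZFSet.mem_union.mp hz with hz | hz
        · exact hdx hz
        · rw [ZFSet.mem_singleton.mp hz]; exact haξx
    | limit ξ hlim IH =>
      intro hξo d hdf hdx
      have hne : Nonempty (Set.Iio ξ) := ⟨⟨0, hlim.pos⟩⟩
      have hu_lim : u ξ = ⋃ η : Set.Iio ξ, u η.1 := by
        ext t
        constructor
        · rintro ⟨p, hp, hpt⟩
          exact Set.mem_iUnion.mpr ⟨⟨p.1 + 1, hlim.succ_lt hp⟩,
            ⟨p, (by exact Order.lt_succ p.1), hpt⟩⟩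
        · intro ht
          obtain ⟨η, hη⟩ := Set.mem_iUnion.mp ht
          exact u_mono (le_of_lt η.2) hη
      have hwd_lim : wd d ξ = ⋃ η : Set.Iio ξ, wd d η.1 := by
        ext t
        constructor
        · intro ht
          obtain ⟨e, hte⟩ := Set.mem_iUnion.mp ht
          have hesub : e.1.toSet ⊆ ⋃ η : Set.Iio ξ, u η.1 := by
            rw [← hu_lim]; exact e.2.2
          obtain ⟨η, hη⟩ := finite_subset_directed_iUnion (fun η : Set.Iio ξ => u η.1)
            (fun i j => by
              rcases le_total i.1 j.1 with h | h
              · exact ⟨j, u_mono h, fun z hz => hz⟩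
              · exact ⟨i, fun z hz => hz, u_mono h⟩) e.2.1 hesub
          exact Set.mem_iUnion.mpr ⟨η, Set.mem_iUnion.mpr ⟨⟨e.1, e.2.1, hη⟩, hte⟩⟩
        · intro ht
          obtain ⟨η, hη⟩ := Set.mem_iUnion.mp ht
          exact wd_mono d (le_of_lt η.2) hη
      have hwdsubV : ∀ η : Ordinal.{u}, wd d η ⊆ Vlt β := wd_subV d hdf hdx
      refine hC.2.1 ξ (pos_iff_ne_zero.mp hlim.pos) ?_
        (fun η => zEl β (wd d η)) ?_ ?_ (zEl β (wd d ξ)) ?_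
      · refine lt_of_le_of_lt ?_ hmκ
        rw [← hocard]
        exact Ordinal.card_le_card hξo
      · intro i j hij hj t ht
        rw [← ZFSet.mem_toSet, toSet_zEl (hwdsubV i)] at ht
        rw [← ZFSet.mem_toSet, toSet_zEl (hwdsubV j)]
        exact wd_mono d hij ht
      · intro η hη
        exact IH η hη (le_trans (le_of_lt hη) hξo) d hdf hdx
      · intro t
        rw [← ZFSet.mem_toSet, toSet_zEl (hwdsubV ξ), hwd_lim]
        constructor
        · intro ht
          obtain ⟨η, hη⟩ := Set.mem_iUnion.mp ht
          refine ⟨η.1, η.2, ?_⟩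
          rw [← ZFSet.mem_toSet, toSet_zEl (hwdsubV η.1)]
          exact hη
        · rintro ⟨η, hη, ht⟩
          rw [← ZFSet.mem_toSet, toSet_zEl (hwdsubV η)] at ht
          exact Set.mem_iUnion.mpr ⟨⟨η, hη⟩, ht⟩
  -- conclude
  have hfin : zEl β (wd ∅ o) ∈ C := by
    apply main o (le_refl o) ∅
    · rw [ZFSet.toSet_empty]; exact Set.finite_empty
    · intro z hz; exact absurd hz (ZFSet.notMem_empty z)
  have hwdtop : wd ∅ o = x.toSet := by
    ext t
    constructor
    · intro ht
      obtain ⟨e, hte⟩ := Set.mem_iUnion.mp ht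
      rw [zf_union_empty] at hte
      have := hcl e.1 e.2.1 (zf_subset_iff.mpr (fun z hz => u_subx o (e.2.2 hz)))
      exact zf_subset_iff.mp this hte
    · intro ht
      refine Set.mem_iUnion.mpr ⟨⟨({t} : ZFSet.{u}), ?_, ?_⟩, ?_⟩
      · rw [toSet_zsingleton]; exact Set.finite_singleton t
      · rw [toSet_zsingleton]
        intro z hz
        rw [hz]
        exact u_top ht
      · rw [zf_union_empty]
        have hgood : Good β ({t} : ZFSet.{u}) := by
          constructor
          · rw [toSet_zsingleton]; exact Set.finite_singleton t
          · rw [toSet_zsingleton]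
            intro z hz
            rw [hz]
            exact hx.2 ht
        exact Ffin_supset hκ hC hG hgood (ZFSet.mem_singleton.mpr rfl)
  rw [hwdtop, zEl_roundtrip hx.2] at hfin
  exact hfin

end STAux
end AuxST7

noncomputable section AuxST8
namespace STAux
open Cardinal Set

variable {κ : Cardinal.{u}}

/-- THE LIFTING LEMMA: a stationary subset of `𝒫_κ(V_δ)` has stationary lift to any
`𝒫_κ(V_β)` with `δ ≤ β`: every club of `𝒫_κ(V_β)` has a member restricting into `W`. -/
theorem lift_stationary (hκ : κ.IsRegular) (hκω : ℵ₀ < κ) {δ β : Ordinal.{u}} (hδβ : δ ≤ β)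
    {W : Set ZFSet.{u}} (hW : zStationary κ δ W) {C : Set ZFSet.{u}} (hC : zClub κ β C) :
    ∃ x : ZFSet.{u}, x ∈ C ∧ restr δ x ∈ W := by
  classical
  -- choice function into the club C
  have hGex : ∃ G : ZFSet.{u} → ZFSet.{u}, ∀ s, inPk κ β s → G s ∈ C ∧ s ⊆ G s := by
    choose g hg1 hg2 using fun s (hs : inPk κ β s) => hC.2.2 s hs
    refine ⟨fun s => if hs : inPk κ β s then g s hs else s, ?_⟩
    intro s hs
    simp only [dif_pos hs]
    exact ⟨hg1 s hs, hg2 s hs⟩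
  obtain ⟨G, hG⟩ := hGex
  have hVsub : Vlt δ ⊆ Vlt β := fun t ht => lt_of_lt_of_le ht hδβ
  -- the projected club on 𝒫_κ(V_δ)
  set D : Set ZFSet.{u} := {y | inPk κ δ y ∧ clF G β y.toSet ∩ Vlt δ = y.toSet} with hD
  have hDclub : zClub κ δ D := by
    refine ⟨fun y hy => hy.1, ?_, ?_⟩
    · -- closed
      intro γ hγ0 hγ z hmono hz w hw
      have hwinPk : inPk κ δ w := inPk_of_chain hκ hγ (fun i hi => (hz i hi).1) hw
      refine ⟨hwinPk, ?_⟩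
      have hwTo : w.toSet = ⋃ i : Set.Iio γ, (z i.1).toSet := by
        ext t
        simp only [Set.mem_iUnion]
        constructor
        · intro ht
          obtain ⟨i, hi, hti⟩ := (hw t).mp ht
          exact ⟨⟨i, hi⟩, hti⟩
        · rintro ⟨i, hti⟩
          exact (hw t).mpr ⟨i.1, i.2, hti⟩
      haveI : Nonempty (Set.Iio γ) := ⟨⟨0, pos_iff_ne_zero.mpr hγ0⟩⟩
      have hdir : ∀ i j : Set.Iio γ, ∃ k : Set.Iio γ,
          (z i.1).toSet ⊆ (z k.1).toSet ∧ (z j.1).toSet ⊆ (z k.1).toSet := by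
        intro i j
        rcases le_total i.1 j.1 with h | h
        · exact ⟨j, fun t ht => hmono i.1 j.1 h j.2 ht, fun t ht => ht⟩
        · exact ⟨i, fun t ht => ht, fun t ht => hmono j.1 i.1 h i.2 ht⟩
      apply Set.Subset.antisymm
      · intro t ht
        have ht2 : t ∈ clF G β (⋃ i : Set.Iio γ, (z i.1).toSet) ∩ Vlt δ := by
          rwa [← hwTo]
        obtain ⟨i, hti⟩ := Set.mem_iUnion.mp
          (clF_iUnion_sub G β (fun i : Set.Iio γ => (z i.1).toSet) hdir ht2.1)
        have : t ∈ (z i.1).toSet := by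
          rw [← (hz i.1 i.2).2]
          exact ⟨hti, ht2.2⟩
        exact (hw t).mpr ⟨i.1, i.2, this⟩
      · intro t ht
        exact ⟨clF_supset G β w.toSet ht, hwinPk.2 ht⟩
    · -- unbounded
      intro y0 hy0
      set t : ℕ → Set ZFSet.{u} :=
        fun n => Nat.rec y0.toSet (fun _ s => clF G β s ∩ Vlt δ) n with ht
      have htstep : ∀ n, t (n + 1) = clF G β (t n) ∩ Vlt δ := fun n => rfl
      have htgood : ∀ n, t n ⊆ Vlt δ ∧ sSmall κ (t n) ∧ t n ⊆ t (n + 1) := by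
        intro n
        induction n with
        | zero =>
          refine ⟨hy0.2, hy0.1, ?_⟩
          rw [htstep 0]
          exact fun s hs => ⟨clF_supset G β _ hs, hy0.2 hs⟩
        | succ n IH =>
          obtain ⟨hsubδ, hsmall, _⟩ := IH
          have h1 : t (n + 1) ⊆ Vlt δ := by
            rw [htstep n]; exact Set.inter_subset_right
          have h2 : sSmall κ (t (n + 1)) := by
            rw [htstep n]
            exact sSmall_mono Set.inter_subset_left
              (clF_small hκ hκω hC hG hsmall (fun s hs => hVsub (hsubδ hs)))
          refine ⟨h1, h2, ?_⟩
          rw [htstep (n + 1)]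
          exact fun s hs => ⟨clF_supset G β _ hs, h1 hs⟩
      have htmono : ∀ {m n : ℕ}, m ≤ n → t m ⊆ t n := by
        intro m n h
        induction n with
        | zero => rw [Nat.le_zero.mp h]
        | succ n IH =>
          rcases Nat.lt_or_ge m (n + 1) with h' | h'
          · exact fun s hs => (htgood n).2.2 (IH (Nat.lt_succ_iff.mp h') hs)
          · rw [le_antisymm h h']
      set tω : Set ZFSet.{u} := ⋃ n : ULift.{u + 1} ℕ, t n.down with htω
      have htωδ : tω ⊆ Vlt δ := by
        intro s hs
        obtain ⟨n, hn⟩ := Set.mem_iUnion.mp hs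
        exact (htgood n.down).1 hn
      have htωsmall : sSmall κ tω := by
        apply sSmall_iUnion hκ
        · rw [Cardinal.mk_uLift, Cardinal.mk_nat, Cardinal.lift_aleph0]
          have h2 : (ℵ₀ : Cardinal.{u+1}) = Cardinal.lift.{u+1} (ℵ₀ : Cardinal.{u}) :=
            Cardinal.lift_aleph0.symm
          rw [h2]
          exact Cardinal.lift_lt.mpr hκω
        · exact fun n => (htgood n.down).2.1
      have hcont : clF G β tω ⊆ ⋃ n : ULift.{u + 1} ℕ, clF G β (t n.down) := by
        apply clF_iUnion_sub G β
        intro i j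
        exact ⟨⟨max i.down j.down⟩, htmono (le_max_left _ _), htmono (le_max_right _ _)⟩
      have heq : clF G β tω ∩ Vlt δ = tω := by
        apply Set.Subset.antisymm
        · rintro s ⟨hs1, hs2⟩
          obtain ⟨n, hn⟩ := Set.mem_iUnion.mp (hcont hs1)
          have : s ∈ t (n.down + 1) := by
            rw [htstep n.down]
            exact ⟨hn, hs2⟩
          exact Set.mem_iUnion.mpr ⟨⟨n.down + 1⟩, this⟩
        · intro s hs
          exact ⟨clF_supset G β tω hs, htωδ hs⟩
      refine ⟨zEl δ tω, ⟨⟨?_, ?_⟩, ?_⟩, ?_⟩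
      · rw [zsmall_iff_sSmall, toSet_zEl htωδ]; exact htωsmall
      · rw [toSet_zEl htωδ]; exact htωδ
      · rw [toSet_zEl htωδ]; exact heq
      · intro s hs
        rw [← ZFSet.mem_toSet, toSet_zEl htωδ]
        exact Set.mem_iUnion.mpr ⟨⟨0⟩, hs⟩
  -- meet the stationary set
  obtain ⟨y, hyW, hyD⟩ := hW.2 D hDclub
  have hyinPk : inPk κ δ y := hyD.1
  have hysubβ : y.toSet ⊆ Vlt β := fun s hs => hVsub (hyinPk.2 hs)
  have hclsubβ : clF G β y.toSet ⊆ Vlt β := clF_subV hκ hC hG hyinPk.1 hysubβ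
  refine ⟨zEl β (clF G β y.toSet), ?_, ?_⟩
  · apply closed_mem hκ hC hG
    · constructor
      · rw [zsmall_iff_sSmall, toSet_zEl hclsubβ]
        exact clF_small hκ hκω hC hG hyinPk.1 hysubβ
      · rw [toSet_zEl hclsubβ]; exact hclsubβ
    · intro e hef hesub
      rw [zf_subset_iff, toSet_zEl hclsubβ] at hesub ⊢
      exact clF_closed hκ hC hG hef hesub
  · have : restr δ (zEl β (clF G β y.toSet)) = y := by
      apply ZFSet.toSet_injective
      rw [toSet_restr, toSet_zEl hclsubβ]
      exact hyD.2
    rwa [this]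

end STAux
end AuxST8

noncomputable section AuxST9
namespace STAux
open Cardinal Set

variable {κ : Cardinal.{u}}

/-- normality: the diagonal intersection of clubs indexed by the members of `A` is club. -/
theorem club_diagonal (hκ : κ.IsRegular) (hκω : ℵ₀ < κ) {β : Ordinal.{u}} {A : ZFSet.{u}}
    (cF : ZFSet.{u} → Set ZFSet.{u}) (hcF : ∀ X, X ∈ A → zClub κ β (cF X)) :
    zClub κ β {x : ZFSet.{u} | inPk κ β x ∧ ∀ X, X ∈ A → X ∈ x → x ∈ cF X} := by
  classical
  refine ⟨fun y hy => hy.1, ?_, ?_⟩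
  · -- closed
    intro γ hγ0 hγ z hmono hz w hw
    refine ⟨inPk_of_chain hκ hγ (fun i hi => (hz i hi).1) hw, ?_⟩
    intro X hXA hXw
    obtain ⟨i0, hi0, hXi0⟩ := (hw X).mp hXw
    refine (hcF X hXA).2.1 γ hγ0 hγ (fun j => z (max i0 j)) ?_ ?_ w ?_
    · intro i j hij hj
      exact hmono _ _ (max_le_max (le_refl i0) hij) (max_lt hi0 hj)
    · intro j hj
      have hmax : max i0 j < γ := max_lt hi0 hj
      have hXmax : X ∈ z (max i0 j) := hmono i0 _ (le_max_left i0 j) hmax hXi0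
      exact ((hz _ hmax).2) X hXA hXmax
    · intro t
      rw [hw t]
      constructor
      · rintro ⟨i, hi, hti⟩
        exact ⟨i, hi, hmono i _ (le_max_right i0 i) (max_lt hi0 hi) hti⟩
      · rintro ⟨i, hi, hti⟩
        exact ⟨max i0 i, max_lt hi0 hi, hti⟩
  · -- unbounded
    intro x0 hx0
    -- one closing step, via intersections of small families of clubs
    have hstep : ∀ s : ZFSet.{u}, inPk κ β s → ∃ s' : ZFSet.{u}, inPk κ β s' ∧ s ⊆ s' ∧
        ∀ X, X ∈ A → X ∈ s → s' ∈ cF X := by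
      intro s hs
      have hι : Cardinal.mk ↥(A.toSet ∩ s.toSet) < Cardinal.lift.{u + 1} κ :=
        lt_of_le_of_lt (Cardinal.mk_le_mk_of_subset Set.inter_subset_right) hs.1
      have hclub := club_iInter hκ hκω (fun X : ↥(A.toSet ∩ s.toSet) => cF X.1) hι
        (fun X => hcF X.1 X.2.1)
      obtain ⟨s', hs', hss'⟩ := hclub.2.2 s hs
      refine ⟨s', hs'.1, hss', ?_⟩
      intro X hXA hXs
      exact hs'.2 ⟨X, hXA, hXs⟩
    choose step hstep1 hstep2 hstep3 using hstep
    set f : ℕ → ZFSet.{u} := fun n => Nat.rec x0 (fun _ s =>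
      if hs : inPk κ β s then step s hs else s) n with hf
    have hfgood : ∀ n, inPk κ β (f n) ∧ f n ⊆ f (n + 1) ∧
        ∀ X, X ∈ A → X ∈ f n → f (n + 1) ∈ cF X := by
      intro n
      induction n with
      | zero =>
        have h0 : f 0 = x0 := rfl
        have h1 : f (0 + 1) = step x0 hx0 := by
          show (if hs : inPk κ β x0 then step x0 hs else x0) = step x0 hx0
          rw [dif_pos hx0]
        rw [h0, h1]
        exact ⟨hx0, hstep2 x0 hx0, fun X hXA hXx => hstep3 x0 hx0 X hXA hXx⟩
      | succ n IH =>
        have hn1 : inPk κ β (f (n + 1)) := by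
          have h1 : f (n + 1) = step (f n) IH.1 := by
            show (if hs : inPk κ β (f n) then step (f n) hs else f n) = step (f n) IH.1
            rw [dif_pos IH.1]
          rw [h1]
          exact hstep1 (f n) IH.1
        have h2 : f (n + 1 + 1) = step (f (n + 1)) hn1 := by
          show (if hs : inPk κ β (f (n + 1)) then step (f (n + 1)) hs else f (n + 1))
            = step (f (n + 1)) hn1
          rw [dif_pos hn1]
        rw [h2]
        exact ⟨hn1, hstep2 _ hn1, fun X hXA hXx => hstep3 _ hn1 X hXA hXx⟩
    have hfmono : ∀ {m n : ℕ}, m ≤ n → f m ⊆ f n := by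
      intro m n h
      induction n with
      | zero => rw [Nat.le_zero.mp h]
      | succ n IH =>
        rcases Nat.lt_or_ge m (n + 1) with h' | h'
        · exact fun t ht => (hfgood n).2.1 (IH (Nat.lt_succ_iff.mp h') ht)
        · rw [le_antisymm h h']
    have hwsub : (⋃ n : ULift.{u + 1} ℕ, (f n.down).toSet) ⊆ Vlt β := by
      rintro t ht
      obtain ⟨n, hn⟩ := Set.mem_iUnion.mp ht
      exact ((hfgood n.down).1).2 hn
    set w : ZFSet.{u} := zEl β (⋃ n : ULift.{u + 1} ℕ, (f n.down).toSet) with hwdef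
    have hwmem : ∀ t : ZFSet.{u}, t ∈ w ↔ ∃ n : ℕ, t ∈ f n := by
      intro t
      rw [← ZFSet.mem_toSet, toSet_zEl hwsub]
      simp only [Set.mem_iUnion]
      exact ⟨fun ⟨n, hn⟩ => ⟨n.down, hn⟩, fun ⟨n, hn⟩ => ⟨⟨n⟩, hn⟩⟩
    have hwinPk : inPk κ β w := by
      constructor
      · rw [zsmall_iff_sSmall, toSet_zEl hwsub]
        apply sSmall_iUnion hκ
        · rw [Cardinal.mk_uLift, Cardinal.mk_nat, Cardinal.lift_aleph0]
          have h2 : (ℵ₀ : Cardinal.{u+1}) = Cardinal.lift.{u+1} (ℵ₀ : Cardinal.{u}) :=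
            Cardinal.lift_aleph0.symm
          rw [h2]
          exact Cardinal.lift_lt.mpr hκω
        · exact fun n => ((hfgood n.down).1).1
      · rw [toSet_zEl hwsub]; exact hwsub
    refine ⟨w, ⟨hwinPk, ?_⟩, ?_⟩
    · intro X hXA hXw
      obtain ⟨n, hn⟩ := (hwmem X).mp hXw
      apply omega_chain_mem hκω (hcF X hXA).2.1 (f := fun k => f (n + 1 + k))
        (hmono := fun k => hfmono (m := n + 1 + k) (n := n + 1 + (k + 1)) (by omega))
        (hmem := ?_) (hw := ?_)
      · intro k
        show f (n + 1 + k) ∈ cF X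
        have heq : n + 1 + k = n + k + 1 := by omega
        rw [heq]
        exact (hfgood (n + k)).2.2 X hXA (hfmono (m := n) (n := n + k) (by omega) hn)
      · intro t
        rw [hwmem t]
        constructor
        · rintro ⟨j, hj⟩
          exact ⟨j, hfmono (m := j) (n := n + 1 + j) (by omega) hj⟩
        · rintro ⟨k, hk⟩
          exact ⟨n + 1 + k, hk⟩
    · intro t ht
      exact (hwmem t).mpr ⟨0, ht⟩

end STAux
end AuxST9

noncomputable section AuxST10
namespace STAux
open Cardinal Set

variable {κ : Cardinal.{u}}

theorem ord_lt_add_one (o : Ordinal.{u}) : o < o + 1 := by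
  rw [Ordinal.add_one_eq_succ]
  exact Order.lt_succ o

theorem inPk_empty (hκ : κ.IsRegular) (β : Ordinal.{u}) : inPk κ β (∅ : ZFSet.{u}) := by
  constructor
  · rw [zsmall_iff_sSmall, ZFSet.toSet_empty]
    exact sSmall_empty hκ
  · rw [ZFSet.toSet_empty]
    exact Set.empty_subset _

/-- for `κ = ℵ₀`, stationary sets contain cones. -/
theorem stationary_cone_of_aleph0 {β : Ordinal.{u}} {S : Set ZFSet.{u}}
    (hκa : κ = ℵ₀) (hS : zStationary κ β S) :
    ∃ x0 : ZFSet.{u}, inPk κ β x0 ∧ ∀ z : ZFSet.{u}, inPk κ β z → x0 ⊆ z → z ∈ S := by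
  by_contra hno
  push_neg at hno
  have hclub : zClub κ β {z : ZFSet.{u} | inPk κ β z ∧ z ∉ S} := by
    refine ⟨fun y hy => hy.1, ?_, ?_⟩
    · intro γ hγ0 hγ z hmono hz w hw
      have hγω : γ < Ordinal.omega0 := by
        by_contra hge
        push_neg at hge
        have h1 := Ordinal.card_le_card hge
        rw [Ordinal.card_omega0] at h1
        rw [hκa] at hγ
        exact absurd hγ (not_lt_of_ge h1)
      obtain ⟨n, rfl⟩ := Ordinal.lt_omega0.mp hγω
      obtain ⟨m, rfl⟩ : ∃ m, n = m + 1 := by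
        cases n with
        | zero => exact absurd (by norm_num) hγ0
        | succ m => exact ⟨m, rfl⟩
      have hmγ : ((m : ℕ) : Ordinal.{u}) < ((m + 1 : ℕ) : Ordinal.{u}) := by
        exact_mod_cast Nat.lt_succ_self m
      have hweq : w = z m := by
        apply ZFSet.ext; intro t
        rw [hw t]
        constructor
        · rintro ⟨i, hi, hti⟩
          have him : i ≤ ((m : ℕ) : Ordinal.{u}) := by
            have h2 : i < ((m : ℕ) : Ordinal.{u}) + 1 := by
              have : ((m + 1 : ℕ) : Ordinal.{u}) = ((m : ℕ) : Ordinal.{u}) + 1 := by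
                push_cast
                ring
              rwa [this] at hi
            rw [Ordinal.add_one_eq_succ] at h2
            exact Order.lt_succ_iff.mp h2
          exact hmono i m him hmγ hti
        · intro ht
          exact ⟨m, hmγ, ht⟩
      rw [hweq]
      exact hz m hmγ
    · intro x hx
      obtain ⟨z, hz1, hz2, hz3⟩ := hno x hx
      exact ⟨z, ⟨hz1, hz3⟩, hz2⟩
  obtain ⟨y, hyS, hyC⟩ := hS.2 _ hclub
  exact hyC.2 hyS

/-- the full set `𝒫_κ(V_α)` is a stationary ZF set. -/
theorem stationary_zOf_full (hκ : κ.IsRegular) (α : Ordinal.{u}) :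
    zStationary κ α (zOf α {x : ZFSet.{u} | inPk κ α x}).toSet := by
  have htoSet : (zOf α {x : ZFSet.{u} | inPk κ α x}).toSet = {x : ZFSet.{u} | inPk κ α x} :=
    toSet_zOf (fun x hx => hx.2)
  rw [htoSet]
  refine ⟨fun y hy => hy, ?_⟩
  intro C hC
  obtain ⟨z, hzC, _⟩ := hC.2.2 ∅ (inPk_empty hκ α)
  exact ⟨z, hC.1 z hzC, hzC⟩

theorem qcond_full (hκ : κ.IsRegular) {h0 : Ordinal.{u}} (h : κ.ord < h0) :
    QCond κ h0 (zOf κ.ord {x : ZFSet.{u} | inPk κ κ.ord x}) :=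
  ⟨κ.ord, le_refl _, h, stationary_zOf_full hκ κ.ord⟩

end STAux
end AuxST10

open STAux

/-- if the set `Y` of those `x ∈ 𝒫_κ(V_{μ+1})` catching every maximal
antichain of `ℚ^κ_μ` that belongs to `x` is stationary, then `Y` forces (in `ℚ^κ_λ`)
that the restriction of the generic filter to `ℚ^κ_μ` is generic, i.e. below `Y` the
set of conditions deciding a member of any given maximal antichain of `ℚ^κ_μ` into
the generic filter is dense. -/
theorem antichain_catching_forces_restriction_generic
    (κ mu lam : Cardinal.{u}) (hκ : κ.IsRegular) (hκmu : κ ≤ mu)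
    (hmu : mu.IsInaccessible) (hlam : lam.IsInaccessible) (hmulam : mu < lam)
    (Y : ZFSet.{u})
    (hYdef : ∀ x : ZFSet.{u}, x ∈ Y ↔ (inPk κ (mu.ord + 1) x ∧
      ∀ A : ZFSet.{u}, A ∈ x → QMaxAntichain κ mu.ord A →
        ∃ X, X ∈ A ∧ X ∈ x ∧ x ∩ ZFSet.sUnion X ∈ X))
    (hstat : zStationary κ (mu.ord + 1) Y.toSet) :
    ∀ A : ZFSet.{u}, QMaxAntichain κ mu.ord A →
      ∀ Z : ZFSet.{u}, QCond κ lam.ord Z → QLe κ Z Y →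
        ∃ Z' : ZFSet.{u}, QCond κ lam.ord Z' ∧ QLe κ Z' Z ∧
          ∃ X, X ∈ A ∧ QLe κ Z' X := by
  classical
  intro A hA Z hZ hZY
  obtain ⟨γZ, hκγ, hγlam, hZstat⟩ := hZ
  -- degenerate case: κ = mu, and there are no conditions at all
  by_cases hκmueq : κ = mu
  · exfalso
    have hnocond : ∀ W : ZFSet.{u}, ¬ QCond κ mu.ord W := by
      rintro W ⟨α, h1, h2, _⟩
      rw [← hκmueq] at h2
      exact absurd (lt_of_le_of_lt h1 h2) (lt_irrefl _)
    have hempty : QMaxAntichain κ mu.ord (∅ : ZFSet.{u}) := by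
      refine ⟨?_, ?_, ?_⟩
      · intro X hX; exact absurd hX (ZFSet.notMem_empty X)
      · intro X hX; exact absurd hX (ZFSet.notMem_empty X)
      · intro W hW; exact absurd hW (hnocond W)
    have hrk : (∅ : ZFSet.{u}).rank < mu.ord + 1 := by
      rw [ZFSet.rank_empty]
      exact lt_of_le_of_lt (zero_le : (0 : Ordinal.{u}) ≤ mu.ord) (ord_lt_add_one mu.ord)
    obtain ⟨y, hyY, hyC⟩ := hstat.2 _ (club_memEl hκ hrk)
    obtain ⟨X, hX, _⟩ := ((hYdef y).mp hyY).2 ∅ hyC.2 hempty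
    exact ZFSet.notMem_empty X hX
  have hκmu' : κ < mu := lt_of_le_of_ne hκmu hκmueq
  have hκo : κ.ord < mu.ord := Cardinal.ord_lt_ord.mpr hκmu'
  have hmuLim := Cardinal.isSuccLimit_ord hmu.1.le
  have hlamLim := Cardinal.isSuccLimit_ord hlam.1.le
  have hmuord : mu.ord < lam.ord := Cardinal.ord_lt_ord.mpr hmulam
  have hμ1lam : mu.ord + 1 < lam.ord := by
    rw [Ordinal.add_one_eq_succ]
    exact hlamLim.succ_lt hmuord
  obtain ⟨αY, hαY1, hαY2, hαYnot⟩ := hZY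
  have hrankZ : (ZFSet.sUnion Z).rank = γZ := rank_sUnion_of_stationary hκ hZstat
  have hZUto : (ZFSet.sUnion Z).toSet = Vlt γZ := toSet_sUnion_of_stationary hκ hZstat
  have hrankY : (ZFSet.sUnion Y).rank = mu.ord + 1 := rank_sUnion_of_stationary hκ hstat
  have hYUto : (ZFSet.sUnion Y).toSet = Vlt (mu.ord + 1) := toSet_sUnion_of_stationary hκ hstat
  have hγαY : γZ ≤ αY := by rw [← hrankZ]; exact hαY1
  have hμαY : mu.ord + 1 ≤ αY := by rw [← hrankY]; exact hαY2
  rcases lt_or_eq_of_le hκ.1 with hκω | hκeq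
  · -- main case: κ uncountable
    set δs : Ordinal.{u} := max γZ (mu.ord + 1) with hδs
    have hδlam : δs < lam.ord := max_lt hγlam hμ1lam
    set β : Ordinal.{u} := δs + 1 with hβ
    have hδβ : δs < β := ord_lt_add_one δs
    have hβlam : β < lam.ord := by
      rw [hβ, Ordinal.add_one_eq_succ]
      exact hlamLim.succ_lt hδlam
    have hγδ : γZ ≤ δs := le_max_left _ _
    have hμδ : mu.ord + 1 ≤ δs := le_max_right _ _
    have hγβ : γZ ≤ β := le_trans hγδ (le_of_lt hδβ)
    have hμβ : mu.ord + 1 ≤ β := le_trans hμδ (le_of_lt hδβ)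
    have hμltβ : mu.ord < β := lt_of_lt_of_le (ord_lt_add_one mu.ord) hμβ
    have hκβ : κ.ord ≤ β := le_trans hκγ hγβ
    have hδαY : δs ≤ αY := max_le hγαY hμαY
    -- the projection of Z into Y is almost everywhere a member of Y
    set B : Set ZFSet.{u} :=
      {x | inPk κ δs x ∧ restr γZ x ∈ Z ∧ restr (mu.ord + 1) x ∉ Y} with hB
    have hBnot : ¬ zStationary κ δs B := by
      intro hBstat
      apply hαYnot
      refine ⟨fun y hy => hy.1, ?_⟩
      intro C hC
      obtain ⟨x, hxC, hxB⟩ := lift_stationary hκ hκω hδαY hBstat hC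
      refine ⟨x, ⟨hC.1 x hxC, ?_, ?_⟩, hxC⟩
      · rw [inter_eq_restr hZUto, ← restr_restr hγδ]
        exact hxB.2.1
      · rw [inter_eq_restr hYUto, ← restr_restr hμδ]
        exact hxB.2.2
    obtain ⟨C₀, hC₀club, hC₀disj⟩ := exists_disjoint_club (fun y hy => hy.1) hBnot
    -- A has small rank
    have hrankA : A.rank ≤ mu.ord := by
      rw [ZFSet.rank_le_iff]
      intro X hXA
      obtain ⟨αX, _, hαXmu, hXstat⟩ := hA.1 X hXA
      have h1 : X.rank ≤ αX + 1 := by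
        rw [ZFSet.rank_le_iff]
        intro x hx
        have h2 : x.rank ≤ αX := ZFSet.rank_le_iff.mpr (fun t ht => (hXstat.1 x hx).2 ht)
        exact lt_of_le_of_lt h2 (ord_lt_add_one αX)
      refine lt_of_le_of_lt h1 ?_
      rw [Ordinal.add_one_eq_succ]
      exact hmuLim.succ_lt hαXmu
    have hrankAβ : A.rank < β := lt_of_le_of_lt hrankA hμltβ
    -- the master stationary set
    set S : Set ZFSet.{u} :=
      {x | inPk κ β x ∧ restr γZ x ∈ Z ∧ restr (mu.ord + 1) x ∈ Y ∧ A ∈ x} with hS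
    have hSstat : zStationary κ β S := by
      refine ⟨fun y hy => hy.1, ?_⟩
      intro C hC
      set fam : ULift.{u + 1} (Fin 3) → Set ZFSet.{u} := fun i =>
        match i.down with
        | 0 => C
        | 1 => {x | inPk κ β x ∧ restr δs x ∈ C₀}
        | 2 => {x | inPk κ β x ∧ A ∈ x} with hfamdef
      have hfam : ∀ i, zClub κ β (fam i) := by
        intro i
        match i with
        | ⟨0⟩ => exact hC
        | ⟨1⟩ => exact club_liftRestr hκ (le_of_lt hδβ) hC₀club
        | ⟨2⟩ => exact club_memEl hκ hrankAβ
      have hfammk : Cardinal.mk (ULift.{u + 1} (Fin 3)) < Cardinal.lift.{u + 1} κ :=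
        lt_of_lt_of_le (Cardinal.lt_aleph0_of_finite _) (aleph0_le_lift' hκ)
      have hE := club_iInter hκ hκω fam hfammk hfam
      obtain ⟨x, hxE, hxZproj⟩ := lift_stationary hκ hκω hγβ hZstat hE
      have hxC : x ∈ C := hxE.2 ⟨0⟩
      have hxC₀ : restr δs x ∈ C₀ := (hxE.2 ⟨1⟩).2
      have hxA : A ∈ x := (hxE.2 ⟨2⟩).2
      have hxY : restr (mu.ord + 1) x ∈ Y := by
        by_contra hnot
        apply hC₀disj (restr δs x) ?_ hxC₀
        refine ⟨inPk_restr hxE.1, ?_, ?_⟩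
        · rw [restr_restr hγδ]; exact hxZproj
        · rw [restr_restr hμδ]; exact hnot
      exact ⟨x, ⟨hxE.1, hxZproj, hxY, hxA⟩, hxC⟩
    -- pressing down: a single member of A works stationarily often
    have hexX : ∃ X : ZFSet.{u}, X ∈ A ∧
        zStationary κ β {x : ZFSet.{u} | x ∈ S ∧ X ∈ x ∧ x ∩ ZFSet.sUnion X ∈ X} := by
      by_contra hno
      push_neg at hno
      have hDex : ∀ X : ZFSet.{u}, ∃ D : Set ZFSet.{u}, X ∈ A →
          zClub κ β D ∧
            ∀ x, (x ∈ S ∧ X ∈ x ∧ x ∩ ZFSet.sUnion X ∈ X) → x ∈ D → False := by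
        intro X
        by_cases hX : X ∈ A
        · obtain ⟨D, hD1, hD2⟩ := exists_disjoint_club
            (S := {x : ZFSet.{u} | x ∈ S ∧ X ∈ x ∧ x ∩ ZFSet.sUnion X ∈ X})
            (fun y hy => hy.1.1) (hno X hX)
          exact ⟨D, fun _ => ⟨hD1, fun x hx hxD => hD2 x hx hxD⟩⟩
        · exact ⟨{x | inPk κ β x}, fun h => absurd h hX⟩
      choose cF hcF using hDex
      have hΔ := club_diagonal hκ hκω cF (fun X hX => (hcF X hX).1)
      obtain ⟨x, hxS, hxΔ⟩ := hSstat.2 _ hΔ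
      have hyY : restr (mu.ord + 1) x ∈ Y := hxS.2.2.1
      have hAy : A ∈ restr (mu.ord + 1) x :=
        mem_restr.mpr ⟨hxS.2.2.2, lt_of_le_of_lt hrankA (ord_lt_add_one mu.ord)⟩
      obtain ⟨X, hXA, hXy, hyX⟩ := ((hYdef _).mp hyY).2 A hAy hA
      obtain ⟨αX, hκαX, hαXmu2, hXstat2⟩ := hA.1 X hXA
      have hXx : X ∈ x := restr_subset hXy
      have hXU : ∀ t : ZFSet.{u}, t ∈ ZFSet.sUnion X → t.rank < mu.ord + 1 := by
        intro t ht
        obtain ⟨z, hzX, htz⟩ := ZFSet.mem_sUnion.mp ht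
        exact lt_trans ((hXstat2.1 z hzX).2 htz) (lt_of_lt_of_le hαXmu2
          (le_of_lt (ord_lt_add_one mu.ord)))
      have hinter : x ∩ ZFSet.sUnion X = restr (mu.ord + 1) x ∩ ZFSet.sUnion X := by
        apply ZFSet.ext; intro t
        rw [ZFSet.mem_inter, ZFSet.mem_inter, mem_restr]
        constructor
        · rintro ⟨h1, h2⟩; exact ⟨⟨h1, hXU t h2⟩, h2⟩
        · rintro ⟨⟨h1, _⟩, h2⟩; exact ⟨h1, h2⟩
      have hxSX : x ∈ S ∧ X ∈ x ∧ x ∩ ZFSet.sUnion X ∈ X :=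
        ⟨hxS, hXx, by rw [hinter]; exact hyX⟩
      exact (hcF X hXA).2 x hxSX (hxΔ.2 X hXA hXx)
    obtain ⟨X, hXA, hSXstat⟩ := hexX
    obtain ⟨αX, hκαX, hαXmu2, hXstat2⟩ := hA.1 X hXA
    set Z' : ZFSet.{u} :=
      zOf β {x : ZFSet.{u} | x ∈ S ∧ X ∈ x ∧ x ∩ ZFSet.sUnion X ∈ X} with hZ'
    have hZ'to : Z'.toSet = {x : ZFSet.{u} | x ∈ S ∧ X ∈ x ∧ x ∩ ZFSet.sUnion X ∈ X} :=
      toSet_zOf (fun x hx => hx.1.1.2)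
    have hZ'stat : zStationary κ β Z'.toSet := by rw [hZ'to]; exact hSXstat
    have hZ'Uto : (ZFSet.sUnion Z').toSet = Vlt β := toSet_sUnion_of_stationary hκ hZ'stat
    have hZ'rank : (ZFSet.sUnion Z').rank = β := rank_eq_of_toSet_eq_Vlt hZ'Uto
    have hXUto : (ZFSet.sUnion X).toSet = Vlt αX := toSet_sUnion_of_stationary hκ hXstat2
    refine ⟨Z', ⟨β, hκβ, hβlam, hZ'stat⟩, ?_, X, hXA, ?_⟩
    · refine ⟨β, le_of_eq hZ'rank, by rw [hrankZ]; exact hγβ, ?_⟩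
      apply not_stationary_of_disjoint_club (club_full hκ β)
      rintro x ⟨hxin, hxZ', hxZ⟩ _
      apply hxZ
      rw [inter_eq_restr hZ'Uto, restr_eq_self hxin.2] at hxZ'
      rw [← ZFSet.mem_toSet, hZ'to] at hxZ'
      rw [inter_eq_restr hZUto]
      exact hxZ'.1.2.1
    · refine ⟨β, le_of_eq hZ'rank, ?_, ?_⟩
      · rw [rank_eq_of_toSet_eq_Vlt hXUto]
        exact le_of_lt (lt_trans hαXmu2 hμltβ)
      apply not_stationary_of_disjoint_club (club_full hκ β)
      rintro x ⟨hxin, hxZ', hxX⟩ _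
      apply hxX
      rw [inter_eq_restr hZ'Uto, restr_eq_self hxin.2] at hxZ'
      rw [← ZFSet.mem_toSet, hZ'to] at hxZ'
      exact hxZ'.2.2
  · -- κ = ℵ₀ : stationary sets contain cones, so everything is compatible
    obtain ⟨X, hXA, _⟩ := hA.2.2 _ (qcond_full hκ hκo)
    obtain ⟨αX, hκαX, hαXmu, hXstat⟩ := hA.1 X hXA
    obtain ⟨xZ, hxZin, hxZcone⟩ := stationary_cone_of_aleph0 hκeq.symm hZstat
    obtain ⟨xX, hxXin, hxXcone⟩ := stationary_cone_of_aleph0 hκeq.symm hXstat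
    set β : Ordinal.{u} := max γZ (mu.ord + 1) with hβ
    have hβlam : β < lam.ord := max_lt hγlam hμ1lam
    have hγβ : γZ ≤ β := le_max_left _ _
    have hκβ : κ.ord ≤ β := le_trans hκγ hγβ
    have hαXβ : αX < β :=
      lt_of_lt_of_le (lt_trans hαXmu (ord_lt_add_one mu.ord)) (le_max_right _ _)
    set w0 : ZFSet.{u} := xZ ∪ xX with hw0def
    have hw0 : inPk κ β w0 :=
      inPk_union hκ (inPk_mono hγβ hxZin) (inPk_mono (le_of_lt hαXβ) hxXin)
    set Z' : ZFSet.{u} := zOf β {z : ZFSet.{u} | inPk κ β z ∧ w0 ⊆ z} with hZ'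
    have hZ'to : Z'.toSet = {z : ZFSet.{u} | inPk κ β z ∧ w0 ⊆ z} :=
      toSet_zOf (fun x hx => hx.1.2)
    have hZ'stat : zStationary κ β Z'.toSet := by
      rw [hZ'to]
      refine ⟨fun y hy => hy.1, ?_⟩
      intro C hC
      obtain ⟨z, hzC, hz⟩ := hC.2.2 w0 hw0
      exact ⟨z, ⟨hC.1 z hzC, hz⟩, hzC⟩
    have hZ'Uto : (ZFSet.sUnion Z').toSet = Vlt β := toSet_sUnion_of_stationary hκ hZ'stat
    have hZ'rank : (ZFSet.sUnion Z').rank = β := rank_eq_of_toSet_eq_Vlt hZ'Uto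
    have hXUto : (ZFSet.sUnion X).toSet = Vlt αX := toSet_sUnion_of_stationary hκ hXstat
    have hmem : ∀ x : ZFSet.{u}, x ∩ ZFSet.sUnion Z' ∈ Z' → w0 ⊆ x := by
      intro x hx
      rw [← ZFSet.mem_toSet, hZ'to] at hx
      intro t ht
      exact ZFSet.mem_inter.mp (hx.2 ht) |>.1
    refine ⟨Z', ⟨β, hκβ, hβlam, hZ'stat⟩, ?_, X, hXA, ?_⟩
    · refine ⟨β, le_of_eq hZ'rank, by rw [hrankZ]; exact hγβ, ?_⟩
      apply not_stationary_of_disjoint_club (club_full hκ β)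
      rintro x ⟨hxin, hxZ', hxZ⟩ _
      apply hxZ
      rw [inter_eq_restr hZUto]
      apply hxZcone _ (inPk_restr hxin)
      intro t ht
      refine mem_restr.mpr ⟨hmem x hxZ' (ZFSet.mem_union.mpr (Or.inl ht)), ?_⟩
      exact hxZin.2 ht
    · refine ⟨β, le_of_eq hZ'rank, ?_, ?_⟩
      · rw [rank_eq_of_toSet_eq_Vlt hXUto]
        exact le_of_lt hαXβ
      apply not_stationary_of_disjoint_club (club_full hκ β)
      rintro x ⟨hxin, hxZ', hxX⟩ _
      apply hxX
      rw [inter_eq_restr hXUto]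
      apply hxXcone _ (inPk_restr hxin)
      intro t ht
      refine mem_restr.mpr ⟨hmem x hxZ' (ZFSet.mem_union.mpr (Or.inr ht)), ?_⟩
      exact hxXin.2 ht
end
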